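/- arXiv:1811.09429 — 12 statements merged into one kernel-verified Lean document; each statement's English description precedes it below -/
import Mathlib

section
/- Let G be a finite simple graph, k ≥ 1 a natural number, and v a vertex of G with degree strictly greater than k. Then G has a vertex cover of size at most k if and only if G − v has a vertex cover of size at most k − 1. -/
/-- `X` is a vertex cover of `G`: every edge has at least one endpoint in `X`. -/
def IsVC {V : Type*} (G : SimpleGraph V) (X : Set V) : Prop :=
  ∀ ⦃u w : V⦄, G.Adj u w → u ∈ X ∨ w ∈ X

/-- `G` has a vertex cover of size at most `k`. -/
def HasVC {V : Type*} (G : SimpleGraph V) (k : ℕ) : Prop :=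
  ∃ X : Set V, IsVC G X ∧ X.ncard ≤ k

/-!
A vertex `v` of degree larger than `k` lies in every vertex cover of size at most `k`: a cover
missing `v` must contain all of its neighbours. Conversely, adding `v` to a cover of `G - v`
covers `G`.
-/

namespace IsVC

variable {V : Type*} {G : SimpleGraph V} {X : Set V}

lemma neighborSet_subset (hX : IsVC G X) {v : V} (hv : v ∉ X) : G.neighborSet v ⊆ X :=
  fun _ hw => (hX hw).resolve_left hv

lemma mem_of_ncard_lt_degree [Fintype V] [DecidableRel G.Adj] (hX : IsVC G X) {v : V}
    (hv : X.ncard < G.degree v) : v ∈ X := by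
  by_contra hvX
  have hle := Set.ncard_le_ncard (hX.neighborSet_subset hvX) X.toFinite
  rw [Set.ncard_eq_toFinset_card', Set.toFinset_card, G.card_neighborSet_eq_degree] at hle
  omega

lemma induce (hX : IsVC G X) (s : Set V) : IsVC (G.induce s) (Subtype.val ⁻¹' X) :=
  fun _ _ hab => hX hab

lemma compl_union_image_of_induce {s : Set V} {Y : Set s} (hY : IsVC (G.induce s) Y) :
    IsVC G (sᶜ ∪ Subtype.val '' Y) := by
  intro a b hab
  by_cases ha : a ∈ s
  · by_cases hb : b ∈ s
    · exact (hY (u := ⟨a, ha⟩) (w := ⟨b, hb⟩) hab).imp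
        (fun h => Or.inr ⟨_, h, rfl⟩) (fun h => Or.inr ⟨_, h, rfl⟩)
    · exact Or.inr (Or.inl hb)
  · exact Or.inl (Or.inl ha)

end IsVC

namespace HasVC

variable {V : Type*} {G : SimpleGraph V} {v : V}

lemma induce_ne [Fintype V] [DecidableRel G.Adj] {k : ℕ} (h : HasVC G k)
    (hv : k < G.degree v) : HasVC (G.induce {w : V | w ≠ v}) (k - 1) := by
  obtain ⟨X, hX, hcard⟩ := h
  have hvX : v ∈ X := hX.mem_of_ncard_lt_degree (hcard.trans_lt hv)
  refine ⟨_, hX.induce _, ?_⟩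
  have hpre : (Subtype.val ⁻¹' X : Set {w : V | w ≠ v}).ncard = (X \ {v}).ncard := by
    rw [← Set.ncard_image_of_injective _ Subtype.val_injective, Subtype.image_preimage_coe]
    congr 1
    ext w
    simp [and_comm]
  rw [hpre, Set.ncard_sdiff_singleton_of_mem hvX]
  omega

lemma of_induce_ne {m : ℕ} (h : HasVC (G.induce {w : V | w ≠ v}) m) : HasVC G (m + 1) := by
  obtain ⟨Y, hY, hcard⟩ := h
  have hcompl : {w : V | w ≠ v}ᶜ = {v} := by
    ext w
    simp
  refine ⟨_, hY.compl_union_image_of_induce, ?_⟩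
  calc ({w : V | w ≠ v}ᶜ ∪ Subtype.val '' Y).ncard
      ≤ ({w : V | w ≠ v}ᶜ).ncard + (Subtype.val '' Y).ncard := Set.ncard_union_le _ _
    _ ≤ m + 1 := by
      rw [hcompl, Set.ncard_singleton, Set.ncard_image_of_injective _ Subtype.val_injective]
      omega

end HasVC

theorem stmt_1 {V : Type*} [Fintype V] (G : SimpleGraph V) [DecidableRel G.Adj]
    (k : ℕ) (hk : 1 ≤ k) (v : V) (hv : k < G.degree v) :
    HasVC G k ↔ HasVC (G.induce {w : V | w ≠ v}) (k - 1) := by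
  refine ⟨fun h => h.induce_ne hv, fun h => ?_⟩
  simpa only [Nat.sub_add_cancel hk] using h.of_induce_ne
end

section
/- Let G be a finite simple graph with no isolated vertices and with maximum degree at most k, for a natural number k. If G has a vertex cover of size at most k, then G has at most k² + k vertices and at most k² edges. -/
open Finset

section

variable {V : Type*} {G : SimpleGraph V}

theorem HasVC.exists_finset [Finite V] {k : ℕ} (h : HasVC G k) :
    ∃ s : Finset V, IsVC G s ∧ #s ≤ k := by
  obtain ⟨X, hX, hXk⟩ := h
  exact ⟨X.toFinite.toFinset, by simpa using hX, by rwa [← Set.ncard_eq_toFinset_card]⟩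

variable [Fintype V] [DecidableRel G.Adj] {s : Finset V}

theorem IsVC.card_edgeFinset_le_sum_degree (hs : IsVC G s) :
    #G.edgeFinset ≤ ∑ x ∈ s, G.degree x := by
  classical
  have hcover : G.edgeFinset ⊆ s.biUnion (G.incidenceFinset ·) := by
    intro e he
    rw [SimpleGraph.mem_edgeFinset] at he
    induction e using Sym2.ind with
    | _ u w =>
      rw [mem_biUnion]
      rcases hs he with hu | hw
      · exact ⟨u, hu, (G.mem_incidenceFinset _ _).mpr ⟨he, Sym2.mem_mk_left u w⟩⟩
      · exact ⟨w, hw, (G.mem_incidenceFinset _ _).mpr ⟨he, Sym2.mem_mk_right u w⟩⟩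
  calc #G.edgeFinset ≤ #(s.biUnion (G.incidenceFinset ·)) := card_le_card hcover
    _ ≤ ∑ x ∈ s, #(G.incidenceFinset x) := card_biUnion_le
    _ = ∑ x ∈ s, G.degree x := by simp only [SimpleGraph.card_incidenceFinset_eq_degree]

theorem IsVC.card_le_card_add_sum_degree (hiso : ∀ v : V, ∃ w, G.Adj v w) (hs : IsVC G s) :
    Fintype.card V ≤ #s + ∑ x ∈ s, G.degree x := by
  classical
  have hcover : (univ : Finset V) ⊆ s ∪ s.biUnion (G.neighborFinset ·) := by
    intro v _
    by_cases hv : v ∈ s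
    · exact mem_union_left _ hv
    · obtain ⟨w, hvw⟩ := hiso v
      have hw : w ∈ s := (hs hvw).resolve_left hv
      exact mem_union_right _ (mem_biUnion.mpr ⟨w, hw, (G.mem_neighborFinset w v).mpr hvw.symm⟩)
  calc Fintype.card V ≤ #(s ∪ s.biUnion (G.neighborFinset ·)) := card_le_card hcover
    _ ≤ #s + #(s.biUnion (G.neighborFinset ·)) := card_union_le _ _
    _ ≤ #s + ∑ x ∈ s, #(G.neighborFinset x) := Nat.add_le_add_left card_biUnion_le _
    _ = #s + ∑ x ∈ s, G.degree x := by simp only [SimpleGraph.card_neighborFinset_eq_degree]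

end

theorem stmt_2 {V : Type*} [Fintype V] (G : SimpleGraph V) [DecidableRel G.Adj]
    (k : ℕ)
    (hiso : ∀ v : V, ∃ w, G.Adj v w)
    (hdeg : ∀ v : V, G.degree v ≤ k)
    (h : HasVC G k) :
    Fintype.card V ≤ k ^ 2 + k ∧ G.edgeFinset.card ≤ k ^ 2 := by
  obtain ⟨s, hs, hsk⟩ := h.exists_finset
  have hsum : ∑ x ∈ s, G.degree x ≤ k ^ 2 :=
    calc ∑ x ∈ s, G.degree x ≤ #s * k := sum_le_card_nsmul s _ k fun x _ => hdeg x
      _ ≤ k ^ 2 := by rw [sq]; exact Nat.mul_le_mul_right k hsk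
  constructor
  · have hcard := hs.card_le_card_add_sum_degree hiso
    omega
  · exact (hs.card_edgeFinset_le_sum_degree).trans hsum
end

section
/- Let G be a finite simple graph, k a natural number, and (C, H, B) a crown decomposition of G with |H| ≤ k. Then G has a vertex cover of size at most k if and only if the graph G − (C ∪ H) obtained by deleting all vertices of C and H has a vertex cover of size at most k − |H|. -/
theorem stmt_3 {V : Type*} [Fintype V] [DecidableEq V] (G : SimpleGraph V) (k : ℕ)
    (C H B : Finset V)
    -- (C, H, B) is a partition of V(G)
    (hpart : ∀ v : V,
      (v ∈ C ∧ v ∉ H ∧ v ∉ B) ∨ (v ∉ C ∧ v ∈ H ∧ v ∉ B) ∨ (v ∉ C ∧ v ∉ H ∧ v ∈ B))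
    -- (i) C is a nonempty independent set
    (hCne : C.Nonempty)
    (hCind : ∀ u ∈ C, ∀ w ∈ C, ¬ G.Adj u w)
    -- (ii) no edges between C and B
    (hCB : ∀ u ∈ C, ∀ w ∈ B, ¬ G.Adj u w)
    -- (iii) the bipartite subgraph between C and H has a matching saturating H
    (hmatch : ∃ f : V → V, Set.InjOn f ↑H ∧ ∀ h ∈ H, f h ∈ C ∧ G.Adj h (f h))
    (hHk : H.card ≤ k) :
    HasVC G k ↔ HasVC (G.induce {w : V | w ∉ C ∪ H}) (k - H.card) := by
  classical
  obtain ⟨f, hfinj, hf⟩ := hmatch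
  have hCH : ∀ v, v ∈ C → v ∉ H := by
    intro v hv
    rcases hpart v with ⟨_, h, _⟩ | ⟨h, _, _⟩ | ⟨h, _, _⟩ <;> tauto
  set S : Set V := ↑(C ∪ H) with hS
  constructor
  · rintro ⟨X, hX, hXk⟩
    refine ⟨{w | (w : V) ∈ X}, ?_, ?_⟩
    · intro u w huw
      exact hX huw
    · -- the intersection of X with C ∪ H has at least |H| elements
      set g : V → V := fun h => if h ∈ X then h else f h with hg
      have hmaps : ∀ h ∈ (↑H : Set V), g h ∈ X ∩ S := by
        intro h hh
        simp only [Finset.mem_coe] at hh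
        by_cases hx : h ∈ X
        · simp only [hg, if_pos hx]
          exact ⟨hx, by simp [hS, hh]⟩
        · simp only [hg, if_neg hx]
          obtain ⟨hfC, hfA⟩ := hf h hh
          rcases hX hfA with h1 | h1
          · exact absurd h1 hx
          · exact ⟨h1, by simp [hS, hfC]⟩
      have hginj : Set.InjOn g (↑H : Set V) := by
        intro a ha b hb hab
        simp only [Finset.mem_coe] at ha hb
        simp only [hg] at hab
        by_cases hxa : a ∈ X <;> by_cases hxb : b ∈ X <;>
          simp only [if_pos, if_neg, hxa, hxb, if_true, if_false] at hab
        · exact hab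
        · exact absurd ((hf b hb).1) (by rw [← hab] at *; exact fun hc => hCH a hc ha)
        · exact absurd ((hf a ha).1) (by rw [hab] at *; exact fun hc => hCH b hc hb)
        · exact hfinj ha hb hab
      have hcard1 : H.card ≤ (X ∩ S).ncard := by
        have := Set.ncard_le_ncard_of_injOn g hmaps hginj (Set.toFinite _)
        simpa [Set.ncard_coe_finset] using this
      have hsplit : (X ∩ S).ncard + (X \ S).ncard = X.ncard :=
        Set.ncard_inter_add_ncard_diff_eq_ncard X S (Set.toFinite _)
      have himg : Subtype.val '' {w : {w : V | w ∉ C ∪ H} | (w : V) ∈ X} = X \ S := by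
        ext v
        simp only [Set.mem_image, Set.mem_setOf_eq, Set.mem_diff, Subtype.exists,
          exists_and_left, exists_prop, hS, Finset.coe_union, Set.mem_union,
          Finset.mem_coe, Finset.mem_union]
        constructor
        · rintro ⟨w, hw1, hw2, rfl⟩; tauto
        · rintro ⟨hv1, hv2⟩; exact ⟨v, by tauto, by tauto, rfl⟩
      have hn : ({w : {w : V | w ∉ C ∪ H} | (w : V) ∈ X}).ncard = (X \ S).ncard := by
        rw [← himg, Set.ncard_image_of_injective _ Subtype.val_injective]
      omega
  · rintro ⟨Y, hY, hYk⟩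
    refine ⟨↑H ∪ Subtype.val '' Y, ?_, ?_⟩
    · intro u w huw
      by_cases hu : u ∈ C ∪ H
      · rcases Finset.mem_union.mp hu with hu | hu
        · -- u ∈ C; then w must be in H
          right
          rcases hpart w with ⟨hw, _, _⟩ | ⟨_, hw, _⟩ | ⟨_, _, hw⟩
          · exact absurd huw (hCind u hu w hw)
          · exact Or.inl hw
          · exact absurd huw (hCB u hu w hw)
        · exact Or.inl (Or.inl hu)
      · by_cases hw : w ∈ C ∪ H
        · rcases Finset.mem_union.mp hw with hw | hw
          · left
            rcases hpart u with ⟨hu', _, _⟩ | ⟨_, hu', _⟩ | ⟨_, _, hu'⟩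
            · exact absurd huw (hCind u hu' w hw)
            · exact Or.inl hu'
            · exact absurd huw.symm (hCB w hw u hu')
          · exact Or.inr (Or.inl hw)
        · have : (G.induce {w : V | w ∉ C ∪ H}).Adj ⟨u, hu⟩ ⟨w, hw⟩ := huw
          rcases hY this with h1 | h1
          · exact Or.inl (Or.inr ⟨⟨u, hu⟩, h1, rfl⟩)
          · exact Or.inr (Or.inr ⟨⟨w, hw⟩, h1, rfl⟩)
    · have h1 : (↑H ∪ Subtype.val '' Y : Set V).ncard ≤
          (↑H : Set V).ncard + (Subtype.val '' Y).ncard :=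
        Set.ncard_union_le _ _
      have h2 : (Subtype.val '' Y).ncard = Y.ncard :=
        Set.ncard_image_of_injective _ Subtype.val_injective
      have h3 : (↑H : Set V).ncard = H.card := Set.ncard_coe_finset H
      omega
end

section
/- Let G be a finite simple graph with no isolated vertices and let k be a natural number. If G has at least 3k + 1 vertices, then either G contains a matching of size k + 1, or G admits a crown decomposition. -/
/-!
Take a maximum matching `M`. If `|M| ≤ k`, the at least `k + 1` vertices it misses form an
independent set `I`. If `I` satisfies Hall's condition into its neighbourhood, it is matched into
`N(I)`, which gives `k + 1` disjoint edges. Otherwise some `S ⊆ I` has `|N(S)| < |S|`; a subset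
`C ⊆ S` of maximal deficiency `|C| - |N(C)|` is nonempty and independent, and by maximality
`H = N(C)` satisfies Hall's condition into `C`, so `(C, N(C), rest)` is a crown decomposition.
-/

open Finset

theorem Finset.exists_injective_of_forall_card_le_filter_rel {α β : Type*} [Fintype β]
    (r : α → β → Prop) [DecidableRel r] (s : Finset α)
    (hall : ∀ A ⊆ s, #A ≤ #{b | ∃ a ∈ A, r a b}) :
    ∃ f : s → β, Function.Injective f ∧ ∀ a : s, r a (f a) := by
  refine (Fintype.all_card_le_filter_rel_iff_exists_injective _).1 fun A => ?_
  classical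
  have h := hall (A.map (Function.Embedding.subtype _)) fun a ha => by
    obtain ⟨a, -, rfl⟩ := mem_map.1 ha
    exact a.2
  simpa [card_map] using h

namespace SimpleGraph

variable {V : Type*} (G : SimpleGraph V)

def IsPairMatching (M : Finset (V × V)) : Prop :=
  (∀ p ∈ M, G.Adj p.1 p.2) ∧
    ∀ p ∈ M, ∀ q ∈ M, p ≠ q → p.1 ≠ q.1 ∧ p.1 ≠ q.2 ∧ p.2 ≠ q.1 ∧ p.2 ≠ q.2

def IsCrown (C H B : Finset V) : Prop :=
  (∀ v : V,
    (v ∈ C ∧ v ∉ H ∧ v ∉ B) ∨ (v ∉ C ∧ v ∈ H ∧ v ∉ B) ∨ (v ∉ C ∧ v ∉ H ∧ v ∈ B)) ∧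
  C.Nonempty ∧
  (∀ u ∈ C, ∀ w ∈ C, ¬ G.Adj u w) ∧
  (∀ u ∈ C, ∀ w ∈ B, ¬ G.Adj u w) ∧
  ∃ f : V → V, Set.InjOn f ↑H ∧ ∀ h ∈ H, f h ∈ C ∧ G.Adj h (f h)

variable {G}

theorem IsPairMatching.exists_card_eq {M : Finset (V × V)} {n : ℕ} (hM : G.IsPairMatching M)
    (hn : n ≤ #M) : ∃ M', #M' = n ∧ G.IsPairMatching M' := by
  obtain ⟨M', hsub, hcard⟩ := exists_subset_card_eq hn
  exact ⟨M', hcard, fun p hp => hM.1 p (hsub hp), fun p hp q hq => hM.2 p (hsub hp) q (hsub hq)⟩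

section PairVerts

variable [DecidableEq V]

def pairVerts (M : Finset (V × V)) : Finset V := M.biUnion fun p => {p.1, p.2}

theorem card_pairVerts_le (M : Finset (V × V)) : #(pairVerts M) ≤ 2 * #M :=
  calc #(pairVerts M) ≤ ∑ p ∈ M, #({p.1, p.2} : Finset V) := card_biUnion_le
    _ ≤ ∑ _p ∈ M, 2 := sum_le_sum fun _ _ => card_le_two
    _ = 2 * #M := by rw [sum_const, smul_eq_mul, mul_comm]

theorem fst_mem_pairVerts {M : Finset (V × V)} {p : V × V} (hp : p ∈ M) : p.1 ∈ pairVerts M :=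
  mem_biUnion.2 ⟨p, hp, by simp⟩

theorem snd_mem_pairVerts {M : Finset (V × V)} {p : V × V} (hp : p ∈ M) : p.2 ∈ pairVerts M :=
  mem_biUnion.2 ⟨p, hp, by simp⟩

theorem IsPairMatching.insert {M : Finset (V × V)} {u v : V} (hM : G.IsPairMatching M)
    (huv : G.Adj u v) (hu : u ∉ pairVerts M) (hv : v ∉ pairVerts M) :
    G.IsPairMatching (insert (u, v) M) := by
  have hfresh : ∀ q ∈ M, u ≠ q.1 ∧ u ≠ q.2 ∧ v ≠ q.1 ∧ v ≠ q.2 := fun q hq =>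
    ⟨fun h => hu (h ▸ fst_mem_pairVerts hq), fun h => hu (h ▸ snd_mem_pairVerts hq),
      fun h => hv (h ▸ fst_mem_pairVerts hq), fun h => hv (h ▸ snd_mem_pairVerts hq)⟩
  refine ⟨by simpa [huv] using hM.1, ?_⟩
  simp only [mem_insert]
  rintro p (rfl | hp) q (rfl | hq) hpq
  · exact absurd rfl hpq
  · exact hfresh q hq
  · have := hfresh p hp
    exact ⟨this.1.symm, this.2.2.1.symm, this.2.1.symm, this.2.2.2.symm⟩
  · exact hM.2 p hp q hq hpq

theorem IsPairMatching.isIndepSet_compl_pairVerts [Fintype V] {M : Finset (V × V)}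
    (hM : G.IsPairMatching M) (hmax : ∀ M', G.IsPairMatching M' → #M' ≤ #M) :
    G.IsIndepSet ↑(pairVerts M)ᶜ := by
  intro u hu v hv _ huv
  simp only [coe_compl, Set.mem_compl_iff, mem_coe] at hu hv
  have hnew : (u, v) ∉ M := fun h => hu (fst_mem_pairVerts h)
  have := hmax _ (hM.insert huv hu hv)
  rw [card_insert_of_notMem hnew] at this
  omega

end PairVerts

section Neighbourhood

variable [Fintype V] [DecidableRel G.Adj]

variable (G) in
def nbhd (S : Finset V) : Finset V := {w | ∃ v ∈ S, G.Adj v w}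

variable (G) in
def deficiency (S : Finset V) : ℤ := #S - #(G.nbhd S)

theorem mem_nbhd {S : Finset V} {w : V} : w ∈ G.nbhd S ↔ ∃ v ∈ S, G.Adj v w := by
  simp [nbhd]

theorem disjoint_nbhd_of_isIndepSet {S : Finset V} (hS : G.IsIndepSet S) :
    Disjoint S (G.nbhd S) := by
  refine Finset.disjoint_left.2 fun w hw hwN => ?_
  obtain ⟨v, hv, hvw⟩ := mem_nbhd.1 hwN
  exact hS hv hw hvw.ne hvw

/-- Removing from `C` the neighbours of `T ⊆ N(C)` loses `|N(T) ∩ C|` vertices but at least `|T|`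
neighbours, so a `C` of maximal deficiency satisfies Hall's condition from `N(C)` into `C`. -/
theorem card_le_card_filter_of_forall_deficiency_le {C : Finset V}
    (hC : ∀ C' ⊆ C, G.deficiency C' ≤ G.deficiency C) {T : Finset V} (hT : T ⊆ G.nbhd C) :
    #T ≤ #{v ∈ C | ∃ h ∈ T, G.Adj h v} := by
  classical
  set D : Finset V := {v ∈ C | ∃ h ∈ T, G.Adj h v}
  have hDC : D ⊆ C := filter_subset _ _
  have hnbhd : G.nbhd (C \ D) ⊆ G.nbhd C \ T := by
    intro w hw
    obtain ⟨v, hv, hvw⟩ := mem_nbhd.1 hw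
    obtain ⟨hvC, hvD⟩ := mem_sdiff.1 hv
    refine mem_sdiff.2 ⟨mem_nbhd.2 ⟨v, hvC, hvw⟩, fun hwT => hvD ?_⟩
    exact mem_filter.2 ⟨hvC, w, hwT, hvw.symm⟩
  have h₁ := card_le_card hnbhd
  rw [card_sdiff_of_subset hT] at h₁
  have h₂ := hC (C \ D) sdiff_subset
  simp only [deficiency, card_sdiff_of_subset hDC] at h₂
  have := card_le_card hT
  have := card_le_card hDC
  omega

theorem exists_isCrown_of_card_nbhd_lt {S : Finset V} (hS : G.IsIndepSet S)
    (hlt : #(G.nbhd S) < #S) : ∃ C H B, G.IsCrown C H B := by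
  classical
  obtain ⟨C, hCS, hCmax⟩ := exists_max_image S.powerset G.deficiency ⟨S, mem_powerset_self S⟩
  rw [mem_powerset] at hCS
  have hCind : G.IsIndepSet C := hS.mono (coe_subset.2 hCS)
  have hCne : C.Nonempty := by
    rw [nonempty_iff_ne_empty]
    rintro rfl
    have hempty : G.deficiency ∅ = 0 := by simp [deficiency, nbhd]
    have := hCmax S (mem_powerset_self S)
    simp only [deficiency] at this hempty
    omega
  have hCH := disjoint_nbhd_of_isIndepSet hCind
  have hall : ∀ T ⊆ G.nbhd C, #T ≤ #{v | ∃ h ∈ T, v ∈ C ∧ G.Adj h v} := fun T hT =>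
    (card_le_card_filter_of_forall_deficiency_le
      (fun C' hC' => hCmax C' (mem_powerset.2 (hC'.trans hCS))) hT).trans_eq <|
      congrArg card <| by ext; simp only [mem_filter, mem_univ, true_and]; aesop
  obtain ⟨f, hfinj, hf⟩ := exists_injective_of_forall_card_le_filter_rel _ _ hall
  refine ⟨C, G.nbhd C, (C ∪ G.nbhd C)ᶜ, ?_, hCne, fun u hu w hw h => hCind hu hw h.ne h, ?_,
    fun v => if hv : v ∈ G.nbhd C then f ⟨v, hv⟩ else v, ?_, ?_⟩
  · intro v
    have : v ∈ C → v ∉ G.nbhd C := fun h => Finset.disjoint_left.1 hCH h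
    by_cases hvC : v ∈ C <;> by_cases hvH : v ∈ G.nbhd C <;> simp_all
  · intro u hu w hw huw
    simp only [mem_compl, mem_union, not_or] at hw
    exact hw.2 (mem_nbhd.2 ⟨u, hu, huw⟩)
  · intro u hu v hv huv
    simp only [mem_coe] at hu hv
    exact congrArg Subtype.val (hfinj (a₁ := ⟨u, hu⟩) (a₂ := ⟨v, hv⟩) (by simpa [hu, hv] using huv))
  · intro h hh
    simpa [hh] using hf ⟨h, hh⟩

theorem exists_isPairMatching_card_eq_of_hall {I : Finset V} (hI : G.IsIndepSet I)
    (hall : ∀ A ⊆ I, #A ≤ #(G.nbhd A)) : ∃ M, #M = #I ∧ G.IsPairMatching M := by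
  classical
  obtain ⟨f, hfinj, hf⟩ := exists_injective_of_forall_card_le_filter_rel G.Adj I hall
  have hfI : ∀ v, f v ∉ I := fun v hv => hI v.2 hv (hf v).ne (hf v)
  refine ⟨I.attach.image fun v => (v.1, f v), ?_, ?_, ?_⟩
  · rw [card_image_of_injective _ fun v w h => Subtype.ext (congrArg Prod.fst h), card_attach]
  · simp only [mem_image, mem_attach, true_and, forall_exists_index]
    rintro _ v rfl
    exact hf v
  · simp only [mem_image, mem_attach, true_and]
    rintro _ ⟨v, rfl⟩ _ ⟨w, rfl⟩ hvw
    have hvw' : v ≠ w := fun h => hvw (h ▸ rfl)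
    dsimp only
    exact ⟨fun h => hvw' (Subtype.ext h), fun h => hfI w (h ▸ v.2),
      fun h => hfI v (h ▸ w.2), fun h => hvw' (hfinj h)⟩

end Neighbourhood

end SimpleGraph

open SimpleGraph

theorem stmt_4_general {V : Type*} [Fintype V] (G : SimpleGraph V) (k : ℕ)
    (hcard : 3 * k + 1 ≤ Fintype.card V) :
    -- either G contains a matching of size k + 1 ...
    (∃ M : Finset (V × V), M.card = k + 1 ∧ (∀ p ∈ M, G.Adj p.1 p.2) ∧
      (∀ p ∈ M, ∀ q ∈ M, p ≠ q →
        p.1 ≠ q.1 ∧ p.1 ≠ q.2 ∧ p.2 ≠ q.1 ∧ p.2 ≠ q.2)) ∨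
    -- ... or G admits a crown decomposition (C, H, B)
    (∃ C H B : Finset V,
      (∀ v : V,
        (v ∈ C ∧ v ∉ H ∧ v ∉ B) ∨ (v ∉ C ∧ v ∈ H ∧ v ∉ B) ∨ (v ∉ C ∧ v ∉ H ∧ v ∈ B)) ∧
      C.Nonempty ∧
      (∀ u ∈ C, ∀ w ∈ C, ¬ G.Adj u w) ∧
      (∀ u ∈ C, ∀ w ∈ B, ¬ G.Adj u w) ∧
      (∃ f : V → V, Set.InjOn f ↑H ∧ ∀ h ∈ H, f h ∈ C ∧ G.Adj h (f h))) := by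
  classical
  obtain ⟨M, hM, hMmax⟩ := exists_max_image {M : Finset (V × V) | G.IsPairMatching M} card
    ⟨∅, by simp [IsPairMatching]⟩
  simp only [mem_filter, mem_univ, true_and] at hM hMmax
  by_cases hMk : k + 1 ≤ #M
  · exact Or.inl (hM.exists_card_eq hMk)
  set I := (pairVerts M)ᶜ
  have hI : G.IsIndepSet I := hM.isIndepSet_compl_pairVerts hMmax
  have hIcard : k + 1 ≤ #I := by
    have := card_pairVerts_le M
    rw [card_compl]
    omega
  by_cases hall : ∀ A ⊆ I, #A ≤ #(G.nbhd A)
  · obtain ⟨M', hM'card, hM'⟩ := exists_isPairMatching_card_eq_of_hall hI hall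
    exact Or.inl (hM'.exists_card_eq (hM'card ▸ hIcard))
  · push Not at hall
    obtain ⟨S, hSI, hS⟩ := hall
    exact Or.inr (exists_isCrown_of_card_nbhd_lt (hI.mono (coe_subset.2 hSI)) hS)

theorem stmt_4 {V : Type*} [Fintype V] [DecidableEq V] (G : SimpleGraph V) (k : ℕ)
    (hiso : ∀ v : V, ∃ w, G.Adj v w)
    (hcard : 3 * k + 1 ≤ Fintype.card V) :
    -- either G contains a matching of size k + 1 ...
    (∃ M : Finset (V × V), M.card = k + 1 ∧ (∀ p ∈ M, G.Adj p.1 p.2) ∧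
      (∀ p ∈ M, ∀ q ∈ M, p ≠ q →
        p.1 ≠ q.1 ∧ p.1 ≠ q.2 ∧ p.2 ≠ q.1 ∧ p.2 ≠ q.2)) ∨
    -- ... or G admits a crown decomposition (C, H, B)
    (∃ C H B : Finset V,
      (∀ v : V,
        (v ∈ C ∧ v ∉ H ∧ v ∉ B) ∨ (v ∉ C ∧ v ∈ H ∧ v ∉ B) ∨ (v ∉ C ∧ v ∉ H ∧ v ∈ B)) ∧
      C.Nonempty ∧
      (∀ u ∈ C, ∀ w ∈ C, ¬ G.Adj u w) ∧
      (∀ u ∈ C, ∀ w ∈ B, ¬ G.Adj u w) ∧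
      (∃ f : V → V, Set.InjOn f ↑H ∧ ∀ h ∈ H, f h ∈ C ∧ G.Adj h (f h))) :=
  stmt_4_general G k hcard
end

section
/- (Nemhauser–Trotter) Let G be a finite simple graph and let x : V(G) → ℝ be an optimal fractional vertex cover of G. Let V_1 = {v : x(v) > 1/2} and V_{1/2} = {v : x(v) = 1/2}. Then G has a minimum vertex cover X such that V_1 ⊆ X ⊆ V_1 ∪ V_{1/2}. -/
/-- `x` is a fractional vertex cover of `G`. -/
def IsFracVC {V : Type*} (G : SimpleGraph V) (x : V → ℝ) : Prop :=
  (∀ v, 0 ≤ x v) ∧ ∀ ⦃u w : V⦄, G.Adj u w → 1 ≤ x u + x w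

lemma exists_pos_le_of_pos {ι : Type*} [Finite ι] (f : ι → ℝ) :
    ∃ ε > 0, ∀ i, 0 < f i → ε ≤ f i := by
  rcases {i | 0 < f i}.eq_empty_or_nonempty with hempty | hne
  · exact ⟨1, one_pos, fun i hi => (Set.eq_empty_iff_forall_notMem.1 hempty i hi).elim⟩
  · obtain ⟨a, ha, hmin⟩ := Set.exists_min_image _ f (Set.toFinite _) hne
    exact ⟨f a, ha, hmin⟩

lemma Fintype.sum_indicator_const {ι R : Type*} [Fintype ι] [NonAssocSemiring R]
    (s : Set ι) (c : R) : ∑ i, s.indicator (fun _ => c) i = s.ncard * c := by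
  classical
  simp [Set.indicator_apply, Finset.sum_ite, Set.ncard_eq_toFinset_card']

section VertexCover

variable {V : Type*} {G : SimpleGraph V} {x : V → ℝ} {C : Set V}

variable (G) in
lemma exists_isVC_forall_ncard_le :
    ∃ C, IsVC G C ∧ ∀ Y, IsVC G Y → C.ncard ≤ Y.ncard := by
  obtain ⟨C, hC, hcard⟩ := Nat.sInf_mem (s := {n | ∃ C, IsVC G C ∧ C.ncard = n})
    ⟨_, Set.univ, fun _ _ _ => Or.inl trivial, rfl⟩
  exact ⟨C, hC, fun Y hY => hcard ▸ Nat.sInf_le ⟨Y, hY, rfl⟩⟩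

lemma IsFracVC.add_indicator_sub_indicator (hx : IsFracVC G x) (hC : IsVC G C) {ε : ℝ}
    (hε : 0 ≤ ε) (hεx : ∀ v, 1 / 2 < x v → ε ≤ x v - 1 / 2) :
    IsFracVC G (x + (C ∩ {v | x v < 1 / 2}).indicator (fun _ => ε)
      - ({v | 1 / 2 < x v} \ C).indicator (fun _ => ε)) := by
  -- A vertex losing ε stays at weight ≥ 1/2, and its neighbours lie in C, where they
  -- either gain ε or already have weight ≥ 1/2.
  classical
  refine ⟨fun v => ?_, fun u w huw => ?_⟩
  · have := hx.1 v
    simp only [Pi.add_apply, Pi.sub_apply, Set.indicator_apply]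
    grind
  · have := hx.2 huw
    have := hC huw
    simp only [Pi.add_apply, Pi.sub_apply, Set.indicator_apply]
    grind

lemma IsFracVC.ncard_sdiff_le_ncard_inter [Fintype V] (hx : IsFracVC G x)
    (hopt : ∀ y : V → ℝ, IsFracVC G y → ∑ v, x v ≤ ∑ v, y v) (hC : IsVC G C) :
    ({v | 1 / 2 < x v} \ C).ncard ≤ (C ∩ {v | x v < 1 / 2}).ncard := by
  obtain ⟨ε, hε, hεx⟩ := exists_pos_le_of_pos fun v => x v - 1 / 2
  have := hopt _ (hx.add_indicator_sub_indicator hC hε.le fun v hv => hεx v (sub_pos.2 hv))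
  simp only [Pi.add_apply, Pi.sub_apply, Finset.sum_sub_distrib, Finset.sum_add_distrib,
    Fintype.sum_indicator_const] at this
  have hmul :
      (({v | 1 / 2 < x v} \ C).ncard : ℝ) * ε ≤ (C ∩ {v | x v < 1 / 2}).ncard * ε := by
    linarith
  exact_mod_cast le_of_mul_le_mul_right hmul hε

def roundCover (x : V → ℝ) (C : Set V) : Set V :=
  {v | 1 / 2 < x v} \ C ∪ C \ {v | x v < 1 / 2}

lemma mem_roundCover_of_half_lt {v : V} (hv : 1 / 2 < x v) : v ∈ roundCover x C := by
  by_cases hvC : v ∈ C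
  · exact Or.inr ⟨hvC, fun h => lt_asymm h hv⟩
  · exact Or.inl ⟨hv, hvC⟩

lemma half_le_of_mem_roundCover {v : V} (hv : v ∈ roundCover x C) : 1 / 2 ≤ x v := by
  rcases hv with ⟨hv, -⟩ | ⟨-, hv⟩
  · exact hv.le
  · exact not_lt.1 hv

lemma IsVC.roundCover (hx : IsFracVC G x) (hC : IsVC G C) : IsVC G (roundCover x C) := by
  intro u w huw
  by_cases hu : 1 / 2 < x u
  · exact Or.inl (mem_roundCover_of_half_lt hu)
  by_cases hw : 1 / 2 < x w
  · exact Or.inr (mem_roundCover_of_half_lt hw)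
  have := hx.2 huw
  rcases hC huw with huC | hwC
  · exact Or.inl (Or.inr ⟨huC, fun h => by linarith [show x u < 1 / 2 from h]⟩)
  · exact Or.inr (Or.inr ⟨hwC, fun h => by linarith [show x w < 1 / 2 from h]⟩)

lemma ncard_roundCover_le [Fintype V] (hx : IsFracVC G x)
    (hopt : ∀ y : V → ℝ, IsFracVC G y → ∑ v, x v ≤ ∑ v, y v) (hC : IsVC G C) :
    (roundCover x C).ncard ≤ C.ncard :=
  calc (roundCover x C).ncard
      _ ≤ ({v | 1 / 2 < x v} \ C).ncard + (C \ {v | x v < 1 / 2}).ncard :=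
        Set.ncard_union_le _ _
      _ ≤ (C ∩ {v | x v < 1 / 2}).ncard + (C \ {v | x v < 1 / 2}).ncard :=
        Nat.add_le_add_right (hx.ncard_sdiff_le_ncard_inter hopt hC) _
      _ = C.ncard := Set.ncard_inter_add_ncard_sdiff_eq_ncard _ _

end VertexCover

theorem stmt_5 {V : Type*} [Fintype V] (G : SimpleGraph V) (x : V → ℝ)
    (hx : IsFracVC G x)
    (hopt : ∀ y : V → ℝ, IsFracVC G y → ∑ v, x v ≤ ∑ v, y v) :
    ∃ X : Set V, IsVC G X ∧
      (∀ Y : Set V, IsVC G Y → X.ncard ≤ Y.ncard) ∧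
      (∀ v, 1 / 2 < x v → v ∈ X) ∧
      (∀ v ∈ X, 1 / 2 < x v ∨ x v = 1 / 2) := by
  obtain ⟨C, hC, hCmin⟩ := exists_isVC_forall_ncard_le G
  refine ⟨roundCover x C, hC.roundCover hx,
    fun Y hY => (ncard_roundCover_le hx hopt hC).trans (hCmin Y hY),
    fun v => mem_roundCover_of_half_lt, fun v hv => ?_⟩
  exact (half_le_of_mem_roundCover hv).lt_or_eq.imp_right Eq.symm
end

section
/- Let G be a finite simple graph, k a natural number, and x : V(G) → ℝ an optimal fractional vertex cover of G. Let V_0 = {v : x(v) < 1/2} and V_1 = {v : x(v) > 1/2}, and suppose |V_1| ≤ k. Then G has a vertex cover of size at most k if and only if the graph G − (V_0 ∪ V_1) obtained by deleting all vertices of V_0 and V_1 has a vertex cover of size at most k − |V_1|. -/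
/-!
If a vertex cover `X` missed more vertices of `V₁ = {x > 1/2}` than it uses from
`V₀ = {x < 1/2}`, then lowering `x` by a small `ε` on `V₁ \ X` and raising it by `ε` on `X ∩ V₀`
would give a cheaper fractional vertex cover (an edge leaving `V₁ \ X` ends in `X`, at a vertex
that is either raised or already of weight `≥ 1/2`). Hence `X` has at least `|V₁|` vertices
outside the half-weight vertices, and its remaining vertices cover `G - (V₀ ∪ V₁)`. Conversely,
an edge avoiding `V₁` has both weights equal to `1/2`, so a cover of `G - (V₀ ∪ V₁)` together
with `V₁` covers `G`.
-/

section

variable {V : Type*} {G : SimpleGraph V}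

lemma IsVC.preimage_val {X : Set V} (hX : IsVC G X) (S : Set V) :
    IsVC (G.induce S) (Subtype.val ⁻¹' X) :=
  fun _ _ h => hX h

lemma IsVC.image_val_union {S T : Set V} {Y : Set S} (hY : IsVC (G.induce S) Y)
    (hST : ∀ ⦃u w : V⦄, G.Adj u w → u ∉ T → w ∉ T → u ∈ S ∧ w ∈ S) :
    IsVC G (Subtype.val '' Y ∪ T) := by
  intro u w huw
  by_cases hu : u ∈ T
  · exact .inl (.inr hu)
  by_cases hw : w ∈ T
  · exact .inr (.inr hw)
  obtain ⟨huS, hwS⟩ := hST huw hu hw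
  rcases hY (show (G.induce S).Adj ⟨u, huS⟩ ⟨w, hwS⟩ from huw) with h | h
  · exact .inl (.inl ⟨_, h, rfl⟩)
  · exact .inr (.inl ⟨_, h, rfl⟩)

lemma ncard_preimage_val (S X : Set V) : (Subtype.val ⁻¹' X : Set S).ncard = (X ∩ S).ncard := by
  rw [← Set.ncard_image_of_injective _ Subtype.val_injective, Set.image_preimage_eq_inter_range,
    Subtype.range_coe]

namespace IsFracVC

variable {x : V → ℝ}

lemma not_lt_half_or_half_lt_of_adj (hx : IsFracVC G x) {u w : V} (huw : G.Adj u w)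
    (hu : ¬ 1 / 2 < x u) (hw : ¬ 1 / 2 < x w) :
    ¬ (x u < 1 / 2 ∨ 1 / 2 < x u) ∧ ¬ (x w < 1 / 2 ∨ 1 / 2 < x w) := by
  have := hx.2 huw
  simp only [not_or, not_lt] at hu hw ⊢
  exact ⟨⟨by linarith, hu⟩, by linarith, hw⟩

lemma sub_indicator_add_indicator (hx : IsFracVC G x) {X : Set V} (hX : IsVC G X) {ε : ℝ}
    (hε : 0 ≤ ε) (hεA : ∀ v ∈ {v | 1 / 2 < x v} \ X, ε ≤ x v - 1 / 2) :
    IsFracVC G fun v => x v - ({v | 1 / 2 < x v} \ X).indicator (fun _ => ε) v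
      + (X ∩ {v | x v < 1 / 2}).indicator (fun _ => ε) v := by
  set A := {v | 1 / 2 < x v} \ X
  set B := X ∩ {v | x v < 1 / 2}
  set y := fun v => x v - A.indicator (fun _ => ε) v + B.indicator (fun _ => ε) v
  have hy_off : ∀ v ∉ A, x v ≤ y v := fun v hv => by
    simp only [y, Set.indicator_of_notMem hv]
    linarith [Set.indicator_nonneg (fun _ _ => hε) (s := B) v]
  have hy_on : ∀ v ∈ A, 1 / 2 ≤ y v := fun v hv => by
    have hvB : v ∉ B := fun h => hv.2 h.1
    simp only [y, Set.indicator_of_mem hv, Set.indicator_of_notMem hvB]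
    linarith [hεA v hv]
  have hedge : ∀ ⦃u w⦄, G.Adj u w → u ∈ A → 1 ≤ y u + y w := by
    intro u w huw hu
    have hwX : w ∈ X := (hX huw).resolve_left hu.2
    have hwA : w ∉ A := fun h => h.2 hwX
    by_cases hw : x w < 1 / 2
    · have huB : u ∉ B := fun h => hu.2 h.1
      have hwB : w ∈ B := ⟨hwX, hw⟩
      simp only [y, Set.indicator_of_mem hu, Set.indicator_of_notMem hwA,
        Set.indicator_of_notMem huB, Set.indicator_of_mem hwB]
      linarith [hx.2 huw]
    · linarith [hy_on u hu, hy_off w hwA]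
  refine ⟨fun v => ?_, fun u w huw => ?_⟩
  · by_cases hv : v ∈ A
    · linarith [hy_on v hv]
    · linarith [hy_off v hv, hx.1 v]
  by_cases hu : u ∈ A
  · exact hedge huw hu
  by_cases hw : w ∈ A
  · linarith [hedge huw.symm hw]
  linarith [hy_off u hu, hy_off w hw, hx.2 huw]

end IsFracVC

lemma sum_sub_indicator_add_indicator [Fintype V] (x : V → ℝ) (A B : Set V) (ε : ℝ) :
    ∑ v, (x v - A.indicator (fun _ => ε) v + B.indicator (fun _ => ε) v)
      = ∑ v, x v - A.ncard * ε + B.ncard * ε := by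
  classical
  simp only [Finset.sum_add_distrib, Finset.sum_sub_distrib, Set.indicator_apply, Finset.sum_ite,
    Finset.sum_const, nsmul_eq_mul, mul_zero, add_zero, Set.ncard_eq_toFinset_card',
    Set.toFinset_card, Fintype.card_ofFinset]

section Optimal

variable [Fintype V] {x : V → ℝ}

lemma ncard_gt_half_sdiff_le (hx : IsFracVC G x)
    (hopt : ∀ y : V → ℝ, IsFracVC G y → ∑ v, x v ≤ ∑ v, y v) {X : Set V} (hX : IsVC G X) :
    ({v | 1 / 2 < x v} \ X).ncard ≤ (X ∩ {v | x v < 1 / 2}).ncard := by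
  set A := {v | 1 / 2 < x v} \ X
  by_contra! hlt
  have hA : A.Nonempty := Set.nonempty_of_ncard_ne_zero (by omega)
  obtain ⟨a, ha, ha_min⟩ := A.exists_min_image x A.toFinite hA
  have hε : 0 < x a - 1 / 2 := by linarith [ha.1.out]
  have hy := hx.sub_indicator_add_indicator hX hε.le fun v hv => by linarith [ha_min v hv]
  have hsum := hopt _ hy
  rw [sum_sub_indicator_add_indicator] at hsum
  have hcard : ((X ∩ {v | x v < 1 / 2}).ncard : ℝ) < A.ncard := by exact_mod_cast hlt
  linarith [mul_lt_mul_of_pos_right hcard hε]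

lemma ncard_gt_half_le_ncard_sdiff (hx : IsFracVC G x)
    (hopt : ∀ y : V → ℝ, IsFracVC G y → ∑ v, x v ≤ ∑ v, y v) {X : Set V} (hX : IsVC G X) :
    {v | 1 / 2 < x v}.ncard ≤ (X \ {v | ¬ (x v < 1 / 2 ∨ 1 / 2 < x v)}).ncard := by
  have hdisj : Disjoint (X ∩ {v | 1 / 2 < x v}) (X ∩ {v | x v < 1 / 2}) :=
    Set.disjoint_left.2 fun v h₁ h₂ => lt_asymm (α := ℝ) h₁.2 h₂.2
  calc {v | 1 / 2 < x v}.ncard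
      = ({v | 1 / 2 < x v} ∩ X).ncard + ({v | 1 / 2 < x v} \ X).ncard :=
        (Set.ncard_inter_add_ncard_sdiff_eq_ncard _ _).symm
    _ ≤ (X ∩ {v | 1 / 2 < x v}).ncard + (X ∩ {v | x v < 1 / 2}).ncard := by
        rw [Set.inter_comm]
        exact Nat.add_le_add_left (ncard_gt_half_sdiff_le hx hopt hX) _
    _ = (X ∩ {v | 1 / 2 < x v} ∪ X ∩ {v | x v < 1 / 2}).ncard := (Set.ncard_union_eq hdisj).symm
    _ = (X \ {v | ¬ (x v < 1 / 2 ∨ 1 / 2 < x v)}).ncard := by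
        congr 1
        ext v
        simp only [Set.mem_union, Set.mem_inter_iff, Set.mem_sdiff, Set.mem_ofPred_eq, not_not]
        tauto

end Optimal

end

theorem stmt_6 {V : Type*} [Fintype V] (G : SimpleGraph V) (k : ℕ) (x : V → ℝ)
    (hx : IsFracVC G x)
    (hopt : ∀ y : V → ℝ, IsFracVC G y → ∑ v, x v ≤ ∑ v, y v)
    (hV1 : {v : V | 1 / 2 < x v}.ncard ≤ k) :
    HasVC G k ↔
      HasVC (G.induce {v : V | ¬ (x v < 1 / 2 ∨ 1 / 2 < x v)})
        (k - {v : V | 1 / 2 < x v}.ncard) := by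
  constructor
  · rintro ⟨X, hX, hXk⟩
    refine ⟨_, hX.preimage_val _, ?_⟩
    have hV1X := ncard_gt_half_le_ncard_sdiff hx hopt hX
    have hsplit := Set.ncard_inter_add_ncard_sdiff_eq_ncard X {v | ¬ (x v < 1 / 2 ∨ 1 / 2 < x v)}
    rw [ncard_preimage_val]
    omega
  · rintro ⟨Y, hY, hYk⟩
    refine ⟨_, hY.image_val_union fun u w huw hu hw =>
      hx.not_lt_half_or_half_lt_of_adj huw hu hw, ?_⟩
    calc (Subtype.val '' Y ∪ {v | 1 / 2 < x v}).ncard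
        ≤ (Subtype.val '' Y).ncard + {v | 1 / 2 < x v}.ncard := Set.ncard_union_le _ _
      _ ≤ k := by rw [Set.ncard_image_of_injective _ Subtype.val_injective]; omega
end

section
/- Let G be a finite simple graph, k ≥ 1 a natural number, and {u, v} an edge of G such that u has degree exactly 1. Then G has a vertex cover of size at most k if and only if the graph G − {u, v} obtained by deleting both u and v has a vertex cover of size at most k − 1. -/
theorem stmt_8 {V : Type*} [Fintype V] (G : SimpleGraph V) [DecidableRel G.Adj]
    (k : ℕ) (hk : 1 ≤ k) (u v : V) (huv : G.Adj u v) (hdeg : G.degree u = 1) :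
    HasVC G k ↔ HasVC (G.induce {w : V | w ≠ u ∧ w ≠ v}) (k - 1) := by
  classical
  have huniq : ∀ w : V, G.Adj u w → w = v := by
    intro w hw
    have hns : G.neighborFinset u = {v} := by
      apply Finset.eq_singleton_iff_unique_mem.2
      refine ⟨(G.mem_neighborFinset u v).2 huv, ?_⟩
      intro x hx
      by_contra hxv
      have h2 : 2 ≤ (G.neighborFinset u).card := by
        have : ({x, v} : Finset V) ⊆ G.neighborFinset u := by
          intro y hy
          rcases Finset.mem_insert.1 hy with rfl | hy
          · exact hx
          · have hyv : y = v := by simpa using hy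
            rw [hyv]; exact (G.mem_neighborFinset u v).2 huv
        calc 2 = ({x, v} : Finset V).card := (Finset.card_pair hxv).symm
          _ ≤ _ := Finset.card_le_card this
      rw [SimpleGraph.degree] at hdeg
      omega
    have : w ∈ G.neighborFinset u := (G.mem_neighborFinset u w).2 hw
    rw [hns] at this
    simpa using this
  have hunv : u ≠ v := G.ne_of_adj huv
  constructor
  · rintro ⟨X, hX, hcard⟩
    -- get a cover containing v of size ≤ k
    obtain ⟨X', hX', hvX', hcard'⟩ :
        ∃ X' : Set V, IsVC G X' ∧ v ∈ X' ∧ X'.ncard ≤ k := by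
      by_cases hv : v ∈ X
      · exact ⟨X, hX, hv, hcard⟩
      · have hu : u ∈ X := by
          rcases hX huv with h | h
          · exact h
          · exact absurd h hv
        refine ⟨insert v (X \ {u}), ?_, Set.mem_insert _ _, ?_⟩
        · intro a b hab
          by_cases ha : a = u
          · subst ha
            right
            have := huniq b hab
            subst this
            exact Set.mem_insert _ _
          by_cases hb : b = u
          · subst hb
            left
            have := huniq a hab.symm
            subst this
            exact Set.mem_insert _ _
          rcases hX hab with h | h
          · exact Or.inl (Set.mem_insert_of_mem _ ⟨h, ha⟩)
          · exact Or.inr (Set.mem_insert_of_mem _ ⟨h, hb⟩)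
        · have hfin : X.Finite := Set.toFinite X
          have h1 : (insert v (X \ {u})).ncard ≤ (X \ {u}).ncard + 1 :=
            Set.ncard_insert_le _ _
          have h2 : (X \ {u}).ncard = X.ncard - 1 := by
            rw [Set.ncard_diff_singleton_of_mem hu]
          have h3 : 0 < X.ncard := Set.ncard_pos hfin |>.2 ⟨u, hu⟩
          omega
    -- restrict
    refine ⟨Subtype.val ⁻¹' X', ?_, ?_⟩
    · rintro ⟨a, ha⟩ ⟨b, hb⟩ hab
      exact hX' hab
    · have himg : Subtype.val '' (Subtype.val ⁻¹' X' :
          Set {w : V | w ≠ u ∧ w ≠ v}) ⊆ X' \ {v} := by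
        rintro x ⟨⟨y, hy⟩, hyX, rfl⟩
        exact ⟨hyX, hy.2⟩
      have h1 : (Subtype.val ⁻¹' X' : Set {w : V | w ≠ u ∧ w ≠ v}).ncard
          = (Subtype.val '' (Subtype.val ⁻¹' X' : Set {w : V | w ≠ u ∧ w ≠ v})).ncard :=
        (Set.ncard_image_of_injective _ Subtype.val_injective).symm
      have h2 := Set.ncard_le_ncard himg (Set.toFinite _)
      have h3 : (X' \ {v}).ncard = X'.ncard - 1 :=
        Set.ncard_diff_singleton_of_mem hvX'
      omega
  · rintro ⟨Y, hY, hcard⟩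
    refine ⟨insert v (Subtype.val '' Y), ?_, ?_⟩
    · intro a b hab
      by_cases hav : a = v
      · subst hav; exact Or.inl (Set.mem_insert _ _)
      by_cases hbv : b = v
      · subst hbv; exact Or.inr (Set.mem_insert _ _)
      by_cases hau : a = u
      · exact absurd (huniq b (by rwa [hau] at hab)) hbv
      by_cases hbu : b = u
      · exact absurd (huniq a (by rw [hbu] at hab; exact hab.symm)) hav
      have hadj : (G.induce {w : V | w ≠ u ∧ w ≠ v}).Adj ⟨a, ⟨hau, hav⟩⟩ ⟨b, ⟨hbu, hbv⟩⟩ := hab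
      rcases hY hadj with h | h
      · exact Or.inl (Set.mem_insert_of_mem _ ⟨_, h, rfl⟩)
      · exact Or.inr (Set.mem_insert_of_mem _ ⟨_, h, rfl⟩)
    · have h1 : (insert v (Subtype.val '' Y)).ncard ≤ (Subtype.val '' Y).ncard + 1 :=
        Set.ncard_insert_le _ _
      have h2 : (Subtype.val '' Y).ncard = Y.ncard :=
        Set.ncard_image_of_injective _ Subtype.val_injective
      omega
end

section
/- Let G be a finite simple graph, k ≥ 1 a natural number, and v a vertex of G of degree exactly 2 whose two neighbors a and b are not adjacent in G. Let G' be the graph obtained from G by contracting N[v] = {v, a, b} into a single new vertex z, i.e., G' has vertex set (V(G) \ {v, a, b}) ∪ {z}, contains all edges of G between vertices of V(G) \ {v, a, b}, and z is adjacent in G' exactly to the vertices of (N(a) ∪ N(b)) \ {v, a, b}. Then G has a vertex cover of size at most k if and only if G' has a vertex cover of size at most k − 1. -/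
/-- The graph obtained from `G` by contracting `N[v] = {v, a, b}` into a single new
vertex (represented by `none`): its vertices are `V(G) \ {v, a, b}` plus the new vertex,
it keeps all edges of `G` among `V(G) \ {v, a, b}`, and the new vertex is adjacent
exactly to the vertices of `(N(a) ∪ N(b)) \ {v, a, b}`. -/
def ContractNv {V : Type*} (G : SimpleGraph V) (v a b : V) :
    SimpleGraph (Option {w : V // w ≠ v ∧ w ≠ a ∧ w ≠ b}) :=
  SimpleGraph.fromRel (fun p q =>
    match p, q with
    | some w, some w' => G.Adj w.1 w'.1
    | none, some w => G.Adj a w.1 ∨ G.Adj b w.1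
    | _, _ => False)

theorem stmt_10 {V : Type*} [Fintype V] (G : SimpleGraph V) (k : ℕ) (hk : 1 ≤ k)
    (v a b : V) (hab : a ≠ b) (hN : G.neighborSet v = {a, b}) (hnadj : ¬ G.Adj a b) :
    HasVC G k ↔ HasVC (ContractNv G v a b) (k - 1) := by
  classical
  set S := {w : V // w ≠ v ∧ w ≠ a ∧ w ≠ b} with hS
  have hva : G.Adj v a := by
    have : a ∈ G.neighborSet v := by rw [hN]; exact Set.mem_insert _ _
    exact this
  have hvb : G.Adj v b := by
    have : b ∈ G.neighborSet v := by rw [hN]; simp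
    exact this
  have hvna : v ≠ a := G.ne_of_adj hva
  have hvnb : v ≠ b := G.ne_of_adj hvb
  have hnbr : ∀ w, G.Adj v w → w = a ∨ w = b := by
    intro w hw
    have : w ∈ G.neighborSet v := hw
    rw [hN] at this; exact this
  -- cardinality of the subtype-image of a set
  have himg : ∀ X : Set V,
      ((some '' ((Subtype.val : S → V) ⁻¹' X)) : Set (Option S)).ncard =
        (X \ {v, a, b}).ncard := by
    intro X
    rw [Set.ncard_image_of_injective _ (Option.some_injective S)]
    have : (Subtype.val : S → V) '' ((Subtype.val : S → V) ⁻¹' X) = X \ {v, a, b} := by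
      ext w
      constructor
      · rintro ⟨w', hw', rfl⟩
        refine ⟨hw', ?_⟩
        rintro (h | h | h)
        exacts [w'.2.1 h, w'.2.2.1 h, w'.2.2.2 h]
      · rintro ⟨hwX, hw⟩
        have h1 : w ≠ v := fun h => hw (by simp [h])
        have h2 : w ≠ a := fun h => hw (by simp [h])
        have h3 : w ≠ b := fun h => hw (by simp [h])
        exact ⟨⟨w, h1, h2, h3⟩, hwX, rfl⟩
    rw [← this, Set.ncard_image_of_injective _ Subtype.val_injective]
  constructor
  · -- forward direction
    rintro ⟨X, hX, hcard⟩
    by_cases hc : a ∉ X ∧ b ∉ X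
    · -- v covers both edges; cover of G' without `none`
      have hvX : v ∈ X := (hX hva).resolve_right hc.1
      refine ⟨some '' ((Subtype.val : S → V) ⁻¹' X), ?_, ?_⟩
      · rintro p q hpq
        rw [ContractNv, SimpleGraph.fromRel_adj] at hpq
        obtain ⟨hne, h⟩ := hpq
        match p, q with
        | none, none => exact absurd rfl hne
        | none, some w =>
          right
          have haw : G.Adj a w.1 ∨ G.Adj b w.1 := by tauto
          have hwX : w.1 ∈ X := by
            rcases haw with h' | h'
            · exact (hX h').resolve_left hc.1
            · exact (hX h').resolve_left hc.2
          exact ⟨w, hwX, rfl⟩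
        | some w, none =>
          left
          have haw : G.Adj a w.1 ∨ G.Adj b w.1 := by tauto
          have hwX : w.1 ∈ X := by
            rcases haw with h' | h'
            · exact (hX h').resolve_left hc.1
            · exact (hX h').resolve_left hc.2
          exact ⟨w, hwX, rfl⟩
        | some w, some w' =>
          have hadj : G.Adj w.1 w'.1 := by
            rcases h with h' | h'
            · exact h'
            · exact h'.symm
          rcases hX hadj with h' | h'
          · exact Or.inl ⟨w, h', rfl⟩
          · exact Or.inr ⟨w', h', rfl⟩
      · rw [himg]
        have h1 : (X \ {v, a, b}).ncard ≤ (X \ {v}).ncard := by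
          apply Set.ncard_le_ncard _ ((X.toFinite).diff)
          intro x hx
          exact ⟨hx.1, by simp_all⟩
        have h2 : (X \ {v}).ncard = X.ncard - 1 := by
          rw [Set.ncard_diff (Set.singleton_subset_iff.2 hvX), Set.ncard_singleton]
        have hXpos : 1 ≤ X.ncard := (Set.ncard_pos X.toFinite).2 ⟨v, hvX⟩
        omega
    · -- at least two of {v,a,b} are in X; cover of G' with `none`
      push_neg at hc
      have htwo : ∃ x y : V, x ≠ y ∧ x ∈ X ∧ y ∈ X ∧ x ∈ ({v, a, b} : Set V) ∧
          y ∈ ({v, a, b} : Set V) := by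
        by_cases haX : a ∈ X
        · by_cases hbX : b ∈ X
          · exact ⟨a, b, hab, haX, hbX, by simp, by simp⟩
          · have hvX : v ∈ X := (hX hvb).resolve_right hbX
            exact ⟨v, a, hvna, hvX, haX, by simp, by simp⟩
        · have hbX : b ∈ X := hc haX
          have hvX : v ∈ X := (hX hva).resolve_right haX
          exact ⟨v, b, hvnb, hvX, hbX, by simp, by simp⟩
      obtain ⟨x, y, hxy, hxX, hyX, hxm, hym⟩ := htwo
      refine ⟨insert none (some '' ((Subtype.val : S → V) ⁻¹' X)), ?_, ?_⟩
      · rintro p q hpq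
        rw [ContractNv, SimpleGraph.fromRel_adj] at hpq
        obtain ⟨hne, h⟩ := hpq
        match p, q with
        | none, none => exact absurd rfl hne
        | none, some w => exact Or.inl (Set.mem_insert _ _)
        | some w, none => exact Or.inr (Set.mem_insert _ _)
        | some w, some w' =>
          have hadj : G.Adj w.1 w'.1 := by
            rcases h with h' | h'
            · exact h'
            · exact h'.symm
          rcases hX hadj with h' | h'
          · exact Or.inl (Set.mem_insert_of_mem _ ⟨w, h', rfl⟩)
          · exact Or.inr (Set.mem_insert_of_mem _ ⟨w', h', rfl⟩)
      · have h0 := Set.ncard_insert_le (none : Option S)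
          (some '' ((Subtype.val : S → V) ⁻¹' X))
        rw [himg] at h0
        have h1 : (X \ {v, a, b}).ncard ≤ (X \ {x, y}).ncard := by
          apply Set.ncard_le_ncard _ ((X.toFinite).diff)
          intro z hz
          refine ⟨hz.1, ?_⟩
          intro hzc
          rcases hzc with rfl | rfl
          · exact hz.2 hxm
          · exact hz.2 hym
        have h2 : (X \ {x, y}).ncard = X.ncard - 2 := by
          rw [Set.ncard_diff (show ({x, y} : Set V) ⊆ X by
              rintro z hz
              rcases hz with rfl | rfl <;> assumption), Set.ncard_pair hxy]
        have hXge : 2 ≤ X.ncard := by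
          have := Set.ncard_le_ncard (show ({x, y} : Set V) ⊆ X by
            rintro z hz
            rcases hz with rfl | rfl <;> assumption) X.toFinite
          rw [Set.ncard_pair hxy] at this
          exact this
        omega
  · -- reverse direction
    rintro ⟨Y, hY, hcard⟩
    have hYpre : ((some : S → Option S) ⁻¹' Y).ncard ≤ (Y \ {none}).ncard := by
      rw [← Set.ncard_image_of_injective _ (Option.some_injective S)]
      apply Set.ncard_le_ncard _ ((Y.toFinite).diff)
      rintro p ⟨w, hw, rfl⟩
      exact ⟨hw, by simp⟩
    -- vertices of X coming from Y
    set X0 : Set V := (Subtype.val : S → V) '' ((some : S → Option S) ⁻¹' Y) with hX0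
    have hX0card : X0.ncard = ((some : S → Option S) ⁻¹' Y).ncard :=
      Set.ncard_image_of_injective _ Subtype.val_injective
    have hX0mem : ∀ w : V, w ∈ X0 → w ≠ v ∧ w ≠ a ∧ w ≠ b := by
      rintro w ⟨w', _, rfl⟩; exact w'.2
    have hsub : ∀ u w : V, G.Adj u w → u ≠ v → u ≠ a → u ≠ b → w ≠ v → w ≠ a → w ≠ b →
        u ∈ X0 ∨ w ∈ X0 := by
      intro u w huw hu1 hu2 hu3 hw1 hw2 hw3
      have hadj : (ContractNv G v a b).Adj (some ⟨u, hu1, hu2, hu3⟩) (some ⟨w, hw1, hw2, hw3⟩) := by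
        rw [ContractNv, SimpleGraph.fromRel_adj]
        exact ⟨by simp [huw.ne], Or.inl huw⟩
      rcases hY hadj with h | h
      · exact Or.inl ⟨⟨u, hu1, hu2, hu3⟩, h, rfl⟩
      · exact Or.inr ⟨⟨w, hw1, hw2, hw3⟩, h, rfl⟩
    by_cases hz : (none : Option S) ∈ Y
    · -- replace `none` by {a, b}
      refine ⟨insert a (insert b X0), ?_, ?_⟩
      · intro u w huw
        by_cases hu : u = v
        · subst hu
          rcases hnbr w huw with rfl | rfl
          · exact Or.inr (Set.mem_insert _ _)
          · exact Or.inr (Set.mem_insert_of_mem _ (Set.mem_insert _ _))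
        by_cases hw : w = v
        · subst hw
          rcases hnbr u huw.symm with rfl | rfl
          · exact Or.inl (Set.mem_insert _ _)
          · exact Or.inl (Set.mem_insert_of_mem _ (Set.mem_insert _ _))
        by_cases hua : u = a
        · exact Or.inl (hua ▸ Set.mem_insert _ _)
        by_cases hub : u = b
        · exact Or.inl (by rw [hub]; exact Set.mem_insert_of_mem _ (Set.mem_insert _ _))
        by_cases hwa : w = a
        · exact Or.inr (hwa ▸ Set.mem_insert _ _)
        by_cases hwb : w = b
        · exact Or.inr (by rw [hwb]; exact Set.mem_insert_of_mem _ (Set.mem_insert _ _))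
        rcases hsub u w huw hu hua hub hw hwa hwb with h | h
        · exact Or.inl (Set.mem_insert_of_mem _ (Set.mem_insert_of_mem _ h))
        · exact Or.inr (Set.mem_insert_of_mem _ (Set.mem_insert_of_mem _ h))
      · have h1 : (insert a (insert b X0)).ncard ≤ X0.ncard + 2 := by
          have := Set.ncard_insert_le a (insert b X0)
          have := Set.ncard_insert_le b X0
          omega
        have h2 : (Y \ {none}).ncard = Y.ncard - 1 := by
          rw [Set.ncard_diff (Set.singleton_subset_iff.2 hz), Set.ncard_singleton]
        have hYpos : 1 ≤ Y.ncard := (Set.ncard_pos Y.toFinite).2 ⟨none, hz⟩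
        omega
    · -- add v
      refine ⟨insert v X0, ?_, ?_⟩
      · intro u w huw
        by_cases hu : u = v
        · exact Or.inl (hu ▸ Set.mem_insert _ _)
        by_cases hw : w = v
        · exact Or.inr (hw ▸ Set.mem_insert _ _)
        -- now neither endpoint is v
        have hcov : ∀ u' w' : V, G.Adj u' w' → u' ≠ v → w' ≠ v → (u' = a ∨ u' = b) →
            w' ∈ X0 := by
          intro u' w' h hu' hw' hab'
          have hwa : w' ≠ a := by
            rintro rfl
            rcases hab' with rfl | rfl
            · exact G.irrefl h
            · exact hnadj h.symm
          have hwb : w' ≠ b := by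
            rintro rfl
            rcases hab' with rfl | rfl
            · exact hnadj h
            · exact G.irrefl h
          have hadj : (ContractNv G v a b).Adj none (some ⟨w', hw', hwa, hwb⟩) := by
            rw [ContractNv, SimpleGraph.fromRel_adj]
            refine ⟨by simp, Or.inl ?_⟩
            rcases hab' with rfl | rfl
            · exact Or.inl h
            · exact Or.inr h
          rcases hY hadj with h' | h'
          · exact absurd h' hz
          · exact ⟨⟨w', hw', hwa, hwb⟩, h', rfl⟩
        by_cases hua : u = a
        · exact Or.inr (Set.mem_insert_of_mem _ (hcov u w huw hu hw (Or.inl hua)))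
        by_cases hub : u = b
        · exact Or.inr (Set.mem_insert_of_mem _ (hcov u w huw hu hw (Or.inr hub)))
        by_cases hwa : w = a
        · exact Or.inl (Set.mem_insert_of_mem _ (hcov w u huw.symm hw hu (Or.inl hwa)))
        by_cases hwb : w = b
        · exact Or.inl (Set.mem_insert_of_mem _ (hcov w u huw.symm hw hu (Or.inr hwb)))
        rcases hsub u w huw hu hua hub hw hwa hwb with h | h
        · exact Or.inl (Set.mem_insert_of_mem _ h)
        · exact Or.inr (Set.mem_insert_of_mem _ h)
      · have h1 := Set.ncard_insert_le v X0
        have h2 : (Y \ {none}).ncard ≤ Y.ncard :=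
          Set.ncard_le_ncard Set.diff_subset Y.toFinite
        omega
end

section
/- Let G be a finite simple graph, k a natural number, and v a vertex of G. Suppose (C₁, C₂) is a partition of N(v) with |C₁| ≥ |C₂| ≥ 1 and k ≥ |C₂| such that: (i) both C₁ and C₂ are cliques in G; and (ii) letting M be the set of pairs {c₁, c₂} with c₁ ∈ C₁, c₂ ∈ C₂ and c₁ not adjacent to c₂ in G, every vertex c₁ ∈ C₁ belongs to precisely one pair in M. Let G' be the graph obtained from G by deleting v and all vertices of C₂, and then, for every pair {c₁, c₂} ∈ M with c₁ ∈ C₁ and c₂ ∈ C₂, adding all edges between c₁ and the vertices of N_G(c₂) \ ({v} ∪ C₂ ∪ {c₁}). Then G has a vertex cover of size at most k if and only if G' has a vertex cover of size at most k − |C₂|. -/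
/-- The graph `G'` obtained from `G` by deleting `v` and all of `C₂` and, for every
non-adjacent pair `(c₁, c₂)` with `c₁ ∈ C₁` and `c₂ ∈ C₂` (i.e., every pair of `M`),
adding all edges between `c₁` and the vertices of `N_G(c₂) \ ({v} ∪ C₂ ∪ {c₁})`. -/
def ReduceCliques {V : Type*} (G : SimpleGraph V) (v : V) (C₁ C₂ : Finset V) :
    SimpleGraph {w : V // w ≠ v ∧ w ∉ C₂} :=
  SimpleGraph.fromRel (fun w w' =>
    G.Adj w.1 w'.1 ∨
      (w.1 ∈ C₁ ∧ ∃ c₂ ∈ C₂, ¬ G.Adj w.1 c₂ ∧ G.Adj c₂ w'.1))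

/-!
The clique `K = {v} ∪ C₂` has `|C₂| + 1` vertices, so every vertex cover contains all of `K`
but at most one vertex `u`.

Forward: if `u ∈ C₂`, then `N(u)` lies in the cover, and every new edge `c₁ c` of `G'` comes
from a pair `{c₁, u} ∈ M` unless `c₁` is itself covered; if `K` is covered entirely, `v` can be
traded for the (at most one) uncovered vertex of the clique `C₁`, after which `C₁` covers every
new edge. Either way the cover minus `K` covers `G'`.

Backward: a cover `X'` of `G'` either contains `C₁`, and then `X' ∪ C₂` covers `G`, or misses
some `c₁ ∈ C₁` with partner `c₂`; the new edges at `c₁` force `N(c₂) \ K ⊆ X'`, so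
`X' ∪ (K \ {c₂})` covers `G`.
-/

open SimpleGraph

section VertexCover

variable {V : Type*} {G : SimpleGraph V} {X : Set V}

lemma IsVC.subsingleton_diff {K : Set V} (hX : IsVC G X) (hK : G.IsClique K) :
    (K \ X).Subsingleton := by
  intro a ha b hb
  by_contra hab
  exact (hX (hK ha.1 hb.1 hab)).elim ha.2 hb.2

lemma IsVC.ncard_diff_add_le [Finite V] {K : Set V} (hX : IsVC G X) (hK : G.IsClique K) :
    (X \ K).ncard + K.ncard ≤ X.ncard + 1 := by
  have hXK := Set.ncard_inter_add_ncard_sdiff_eq_ncard X K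
  have hKX := Set.ncard_inter_add_ncard_sdiff_eq_ncard K X
  have hle : (K \ X).ncard ≤ 1 := Set.ncard_le_one_iff_subsingleton.2 (hX.subsingleton_diff hK)
  rw [Set.inter_comm] at hKX
  omega

lemma IsVC.insert_diff_singleton {v a : V} (hX : IsVC G X) (hv : G.neighborSet v ⊆ insert a X) :
    IsVC G (insert a (X \ {v})) := by
  have hN : ∀ w, G.Adj v w → w ∈ insert a (X \ {v}) := fun w hw =>
    (hv hw).imp_right fun hwX => ⟨hwX, hw.ne'⟩
  intro x y hxy
  obtain rfl | hxv := eq_or_ne x v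
  · exact Or.inr (hN y hxy)
  obtain rfl | hyv := eq_or_ne y v
  · exact Or.inl (hN x hxy.symm)
  exact (hX hxy).imp (fun hx => Or.inr ⟨hx, hxv⟩) (fun hy => Or.inr ⟨hy, hyv⟩)

lemma isVC_fromRel {r : V → V → Prop} (h : ∀ u w, r u w → u ∈ X ∨ w ∈ X) :
    IsVC (fromRel r) X := by
  intro u w huw
  obtain ⟨-, huw | hwu⟩ := (fromRel_adj r u w).1 huw
  exacts [h u w huw, (h w u hwu).symm]

lemma IsVC.exists_subset_or_exists_notMem [Finite V] {v : V} {C₁ C₂ : Set V}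
    (hN : G.neighborSet v = C₁ ∪ C₂) (hC₁ : G.IsClique C₁) (hX : IsVC G X) :
    ∃ Y, IsVC G Y ∧ Y.ncard ≤ X.ncard ∧ (C₁ ⊆ Y ∨ ∃ b ∈ C₂, b ∉ Y) := by
  by_cases h : C₁ ⊆ X ∨ ∃ b ∈ C₂, b ∉ X
  · exact ⟨X, hX, le_rfl, h⟩
  push Not at h
  obtain ⟨hC₁X, hC₂X⟩ := h
  obtain ⟨a, haC₁, haX⟩ := Set.not_subset.1 hC₁X
  have hva : G.Adj v a := by rw [← mem_neighborSet, hN]; exact Or.inl haC₁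
  have hvX : v ∈ X := (hX hva).resolve_right haX
  have hC₁a : ∀ c ∈ C₁, c = a ∨ c ∈ X := fun c hc =>
    or_iff_not_imp_right.2 fun hcX => hX.subsingleton_diff hC₁ ⟨hc, hcX⟩ ⟨haC₁, haX⟩
  refine ⟨insert a (X \ {v}), hX.insert_diff_singleton ?_, ?_, Or.inl ?_⟩
  · rw [hN]
    rintro c (hc | hc)
    exacts [hC₁a c hc, Or.inr (hC₂X c hc)]
  · calc (insert a (X \ {v})).ncard ≤ (X \ {v}).ncard + 1 := Set.ncard_insert_le _ _
      _ = X.ncard := by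
        rw [Set.ncard_sdiff_singleton_of_mem hvX]
        have := (Set.ncard_pos).2 ⟨v, hvX⟩
        omega
  · intro c hc
    have hcv : c ≠ v := by
      rintro rfl
      have hcc : c ∈ G.neighborSet c := hN ▸ Or.inl hc
      exact G.irrefl hcc
    exact (hC₁a c hc).imp id fun hcX => ⟨hcX, hcv⟩

end VertexCover

section ReduceCliques

variable {V : Type*} {G : SimpleGraph V} {v : V} {C₁ C₂ : Finset V}

lemma notMem_insert_coe_iff {w : V} : w ∉ insert v (C₂ : Set V) ↔ w ≠ v ∧ w ∉ C₂ := by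
  simp [not_or]

lemma reduceCliques_adj_of_adj {x y : {w : V // w ≠ v ∧ w ∉ C₂}} (h : G.Adj x.1 y.1) :
    (ReduceCliques G v C₁ C₂).Adj x y :=
  (fromRel_adj _ x y).2 ⟨fun hxy => h.ne (congrArg Subtype.val hxy), Or.inl (Or.inl h)⟩

lemma reduceCliques_adj_of_not_adj {x y : {w : V // w ≠ v ∧ w ∉ C₂}} {c : V} (hx : x.1 ∈ C₁)
    (hc : c ∈ C₂) (hxc : ¬ G.Adj x.1 c) (hcy : G.Adj c y.1) :
    (ReduceCliques G v C₁ C₂).Adj x y := by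
  refine (fromRel_adj _ x y).2 ⟨?_, Or.inl (Or.inr ⟨hx, c, hc, hxc, hcy⟩)⟩
  rintro rfl
  exact hxc hcy.symm

lemma ncard_preimage_val_eq_ncard_diff [Finite V] (X : Set V) :
    (Subtype.val ⁻¹' X : Set {w : V // w ≠ v ∧ w ∉ C₂}).ncard
      = (X \ insert v (C₂ : Set V)).ncard := by
  have hpre : (Subtype.val ⁻¹' X : Set {w : V // w ≠ v ∧ w ∉ C₂})
      = Subtype.val ⁻¹' (X \ insert v (C₂ : Set V)) := by
    ext w
    simp [w.2.1, w.2.2]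
  rw [hpre, Set.ncard_preimage_of_injective_subset_range Subtype.val_injective]
  rintro w ⟨-, hw⟩
  exact ⟨⟨w, notMem_insert_coe_iff.1 hw⟩, rfl⟩

lemma isVC_reduceCliques_preimage {X : Set V} (hM : ∀ c₁ ∈ C₁, ∃! c₂, c₂ ∈ C₂ ∧ ¬ G.Adj c₁ c₂)
    (hX : IsVC G X) (h : ↑C₁ ⊆ X ∨ ∃ b ∈ C₂, b ∉ X) :
    IsVC (ReduceCliques G v C₁ C₂) (Subtype.val ⁻¹' X) := by
  apply isVC_fromRel
  rintro p q (hpq | ⟨hp, c, hc, hpc, hcq⟩)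
  · exact hX hpq
  by_cases hpX : p.1 ∈ X
  · exact Or.inl hpX
  obtain hC₁ | ⟨b, hb, hbX⟩ := h
  · exact absurd (hC₁ hp) hpX
  have hpb : ¬ G.Adj p.1 b := fun hpb => (hX hpb).elim hpX hbX
  obtain rfl : c = b := (hM _ hp).unique ⟨hc, hpc⟩ ⟨hb, hpb⟩
  exact Or.inr ((hX hcq).resolve_left hbX)

lemma IsVC.exists_neighborSet_diff_subset_image
    (hpart : (↑C₁ ∪ ↑C₂ : Set V) = G.neighborSet v) (hdisj : Disjoint C₁ C₂)
    (hM : ∀ c₁ ∈ C₁, ∃! c₂, c₂ ∈ C₂ ∧ ¬ G.Adj c₁ c₂)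
    {X' : Set {w : V // w ≠ v ∧ w ∉ C₂}} (hX' : IsVC (ReduceCliques G v C₁ C₂) X') :
    ∃ u ∈ insert v (C₂ : Set V), G.neighborSet u \ insert v ↑C₂ ⊆ Subtype.val '' X' := by
  by_cases hC₁ : ↑C₁ ⊆ Subtype.val '' X'
  · refine ⟨v, Set.mem_insert _ _, fun z ⟨hvz, hzK⟩ => hC₁ ?_⟩
    rw [← hpart] at hvz
    exact hvz.resolve_right fun hz => hzK (Or.inr hz)
  obtain ⟨a, haC₁, haX'⟩ := Set.not_subset.1 hC₁
  obtain ⟨c, ⟨hc, hac⟩, -⟩ := hM a haC₁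
  have hav : a ≠ v := by
    rintro rfl
    exact G.irrefl (hpart ▸ Or.inl haC₁ : a ∈ G.neighborSet a)
  let a' : {w : V // w ≠ v ∧ w ∉ C₂} := ⟨a, hav, Finset.disjoint_left.1 hdisj haC₁⟩
  refine ⟨c, Set.mem_insert_of_mem _ hc, fun z ⟨hcz, hzK⟩ => ?_⟩
  let z' : {w : V // w ≠ v ∧ w ∉ C₂} := ⟨z, notMem_insert_coe_iff.1 hzK⟩
  obtain ha' | hz' := hX' (reduceCliques_adj_of_not_adj (x := a') (y := z') haC₁ hc hac hcz)
  exacts [absurd ⟨a', ha', rfl⟩ haX', ⟨z', hz', rfl⟩]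

lemma IsVC.of_reduceCliques {X' : Set {w : V // w ≠ v ∧ w ∉ C₂}}
    (hX' : IsVC (ReduceCliques G v C₁ C₂) X') {u : V}
    (hu : G.neighborSet u \ insert v ↑C₂ ⊆ Subtype.val '' X') :
    IsVC G (Subtype.val '' X' ∪ (insert v ↑C₂ \ {u})) := by
  set K : Set V := insert v ↑C₂
  have hN : ∀ y, G.Adj u y → y ∈ Subtype.val '' X' ∪ (K \ {u}) := fun y hy => by
    by_cases hyK : y ∈ K
    exacts [Or.inr ⟨hyK, hy.ne'⟩, Or.inl (hu ⟨hy, hyK⟩)]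
  intro x y hxy
  obtain rfl | hxu := eq_or_ne x u
  · exact Or.inr (hN y hxy)
  obtain rfl | hyu := eq_or_ne y u
  · exact Or.inl (hN x hxy.symm)
  by_cases hxK : x ∈ K
  · exact Or.inl (Or.inr ⟨hxK, hxu⟩)
  by_cases hyK : y ∈ K
  · exact Or.inr (Or.inr ⟨hyK, hyu⟩)
  let x' : {w : V // w ≠ v ∧ w ∉ C₂} := ⟨x, notMem_insert_coe_iff.1 hxK⟩
  let y' : {w : V // w ≠ v ∧ w ∉ C₂} := ⟨y, notMem_insert_coe_iff.1 hyK⟩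
  exact (hX' (reduceCliques_adj_of_adj (x := x') (y := y') hxy)).imp
    (fun hx => Or.inl ⟨x', hx, rfl⟩) (fun hy => Or.inl ⟨y', hy, rfl⟩)

end ReduceCliques

theorem stmt_11_general {V : Type*} [Fintype V] (G : SimpleGraph V) (k : ℕ)
    (v : V) (C₁ C₂ : Finset V)
    -- (C₁, C₂) is a partition of N(v)
    (hpart : (↑C₁ ∪ ↑C₂ : Set V) = G.neighborSet v) (hdisj : Disjoint C₁ C₂)
    (hk : C₂.card ≤ k)
    -- (i) C₁ and C₂ are cliques
    (hclique₁ : G.IsClique ↑C₁) (hclique₂ : G.IsClique ↑C₂)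
    -- (ii) every c₁ ∈ C₁ lies in precisely one non-adjacent pair of M
    (hM : ∀ c₁ ∈ C₁, ∃! c₂, c₂ ∈ C₂ ∧ ¬ G.Adj c₁ c₂) :
    HasVC G k ↔ HasVC (ReduceCliques G v C₁ C₂) (k - C₂.card) := by
  have hvC₂ : ∀ c ∈ C₂, G.Adj v c := fun c hc => by
    rw [← mem_neighborSet, ← hpart]
    exact Or.inr hc
  have hK : G.IsClique (insert v ↑C₂) := hclique₂.insert fun c hc _ => hvC₂ c hc
  have hKcard : (insert v (C₂ : Set V)).ncard = C₂.card + 1 := by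
    rw [Set.ncard_insert_of_notMem fun hv => G.irrefl (hvC₂ v hv), Set.ncard_coe_finset]
  constructor
  · rintro ⟨X, hX, hXk⟩
    obtain ⟨Y, hY, hYX, hsplit⟩ := hX.exists_subset_or_exists_notMem hpart.symm hclique₁
    refine ⟨_, isVC_reduceCliques_preimage hM hY hsplit, ?_⟩
    have := hY.ncard_diff_add_le hK
    rw [ncard_preimage_val_eq_ncard_diff]
    omega
  · rintro ⟨X', hX', hX'k⟩
    obtain ⟨u, huK, hu⟩ := hX'.exists_neighborSet_diff_subset_image hpart hdisj hM
    refine ⟨_, hX'.of_reduceCliques hu, ?_⟩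
    calc _ ≤ (Subtype.val '' X').ncard + (insert v (C₂ : Set V) \ {u}).ncard :=
          Set.ncard_union_le _ _
      _ = X'.ncard + C₂.card := by
        rw [Set.ncard_image_of_injective _ Subtype.val_injective,
          Set.ncard_sdiff_singleton_of_mem huK, hKcard, Nat.add_sub_cancel]
      _ ≤ k := by omega

theorem stmt_11 {V : Type*} [Fintype V] [DecidableEq V] (G : SimpleGraph V) (k : ℕ)
    (v : V) (C₁ C₂ : Finset V)
    -- (C₁, C₂) is a partition of N(v)
    (hpart : (↑C₁ ∪ ↑C₂ : Set V) = G.neighborSet v) (hdisj : Disjoint C₁ C₂)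
    (hcard : C₂.card ≤ C₁.card) (hC₂ne : 1 ≤ C₂.card) (hk : C₂.card ≤ k)
    -- (i) C₁ and C₂ are cliques
    (hclique₁ : G.IsClique ↑C₁) (hclique₂ : G.IsClique ↑C₂)
    -- (ii) every c₁ ∈ C₁ lies in precisely one non-adjacent pair of M
    (hM : ∀ c₁ ∈ C₁, ∃! c₂, c₂ ∈ C₂ ∧ ¬ G.Adj c₁ c₂) :
    HasVC G k ↔ HasVC (ReduceCliques G v C₁ C₂) (k - C₂.card) :=
  stmt_11_general G k v C₁ C₂ hpart hdisj hk hclique₁ hclique₂ hM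
end

section
/- Let G, v, (C₁, C₂), M, G' and k be as in the neighborhood-clique reduction: v is a vertex of G, (C₁, C₂) is a partition of N(v) with |C₁| ≥ |C₂| ≥ 1, both C₁ and C₂ are cliques in G, M is the set of non-adjacent pairs {c₁, c₂} with c₁ ∈ C₁ and c₂ ∈ C₂, every vertex of C₁ lies in precisely one pair of M, and G' is obtained from G by deleting v and C₂ and, for every {c₁, c₂} ∈ M, adding all edges between c₁ and N_G(c₂) \ ({v} ∪ C₂ ∪ {c₁}). Then G contains a vertex cover X of size exactly k with |C₁ \ X| = 1 and |C₂ \ X| = 1 if and only if G' contains a vertex cover X' of size exactly k − |C₂| with |C₁ \ X'| = 1. -/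
namespace ReduceCliques

variable {V : Type*} {v : V} {C₂ : Finset V}

def liftCover (v : V) (C₂ : Finset V) (b : V) (X' : Set {w : V // w ≠ v ∧ w ∉ C₂}) :
    Set V :=
  insert v (Subtype.val '' X' ∪ (↑C₂ \ {b}))

theorem ncard_liftCover [Finite V] (hv : v ∉ C₂) {b : V} (hb : b ∈ C₂)
    (X' : Set {w : V // w ≠ v ∧ w ∉ C₂}) :
    (liftCover v C₂ b X').ncard = X'.ncard + C₂.card := by
  have hdisj : Disjoint (Subtype.val '' X') (↑C₂ \ {b} : Set V) := by
    rw [Set.disjoint_left]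
    rintro _ ⟨x, -, rfl⟩ ⟨hx, -⟩
    exact x.2.2 hx
  have hvX : v ∉ Subtype.val '' X' ∪ (↑C₂ \ {b}) := by
    rintro (⟨x, -, hx⟩ | ⟨hvC, -⟩)
    · exact x.2.1 hx
    · exact hv hvC
  have hC₂ := Set.ncard_sdiff_singleton_add_one (Finset.mem_coe.mpr hb) (Finset.finite_toSet C₂)
  rw [liftCover, Set.ncard_insert_of_notMem hvX, Set.ncard_union_eq hdisj,
    Set.ncard_image_of_injective _ Subtype.val_injective, ← Set.ncard_coe_finset, ← hC₂]
  ring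

theorem sdiff_liftCover_of_disjoint {C : Set V} (hvC : v ∉ C) (hC : Disjoint C ↑C₂) (b : V)
    (X' : Set {w : V // w ≠ v ∧ w ∉ C₂}) :
    C \ liftCover v C₂ b X' = C \ Subtype.val '' X' := by
  ext x
  simp only [liftCover, Set.mem_sdiff, Set.mem_insert_iff, Set.mem_union, not_or]
  constructor
  · rintro ⟨hx, -, hx', -⟩
    exact ⟨hx, hx'⟩
  · rintro ⟨hx, hx'⟩
    exact ⟨hx, ne_of_mem_of_not_mem hx hvC, hx', fun h => Set.disjoint_left.mp hC hx h.1⟩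

theorem coe_sdiff_liftCover (hv : v ∉ C₂) {b : V} (hb : b ∈ C₂)
    (X' : Set {w : V // w ≠ v ∧ w ∉ C₂}) :
    ↑C₂ \ liftCover v C₂ b X' = {b} := by
  ext x
  simp only [liftCover, Set.mem_sdiff, Set.mem_insert_iff, Set.mem_union, Set.mem_image,
    Finset.mem_coe, Set.mem_singleton_iff, not_or]
  constructor
  · rintro ⟨hx, -, -, hxb⟩
    exact not_not.mp fun h => hxb ⟨hx, h⟩
  · rintro rfl
    exact ⟨hb, ne_of_mem_of_not_mem hb hv, fun ⟨y, _, hy⟩ => y.2.2 (hy ▸ hb), fun h => h.2 rfl⟩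

theorem liftCover_preimage {X : Set V} (hvX : v ∈ X) {b : V} (hb : ↑C₂ \ X = {b}) :
    liftCover v C₂ b (Subtype.val ⁻¹' X) = X := by
  have hbX : b ∉ X := (hb.symm.subset rfl).2
  ext x
  simp only [liftCover, Set.mem_insert_iff, Set.mem_union, Set.mem_image, Set.mem_preimage,
    Set.mem_sdiff, Finset.mem_coe, Set.mem_singleton_iff]
  constructor
  · rintro (rfl | ⟨y, hy, rfl⟩ | ⟨hx, hxb⟩)
    · exact hvX
    · exact hy
    · exact not_not.mp fun h => hxb (hb.subset ⟨hx, h⟩)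
  · intro hx
    by_cases hxv : x = v
    · exact Or.inl hxv
    by_cases hxC : x ∈ C₂
    · exact Or.inr (Or.inr ⟨hxC, fun h => hbX (h ▸ hx)⟩)
    · exact Or.inr (Or.inl ⟨⟨x, hxv, hxC⟩, hx, rfl⟩)

end ReduceCliques

section

open ReduceCliques

variable {V : Type*} {G : SimpleGraph V} {v : V} {C₁ C₂ : Finset V}

theorem IsVC.preimage_reduceCliques {X : Set V} (hX : IsVC G X)
    (hpartner : ∀ c₁ ∈ C₁, ∀ c₂ ∈ C₂, ¬ G.Adj c₁ c₂ → c₁ ∉ X → c₂ ∉ X) :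
    IsVC (ReduceCliques G v C₁ C₂) (Subtype.val ⁻¹' X) := by
  have key : ∀ u w : V, (G.Adj u w ∨ (u ∈ C₁ ∧ ∃ c₂ ∈ C₂, ¬ G.Adj u c₂ ∧ G.Adj c₂ w)) →
      u ∈ X ∨ w ∈ X := by
    rintro u w (h | ⟨hu, c₂, hc₂, hnadj, hadj⟩)
    · exact hX h
    · by_cases huX : u ∈ X
      · exact Or.inl huX
      · exact Or.inr ((hX hadj).resolve_left (hpartner u hu c₂ hc₂ hnadj huX))
  intro u w huw
  rw [ReduceCliques, SimpleGraph.fromRel_adj] at huw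
  rcases huw.2 with h | h
  · exact key _ _ h
  · exact (key _ _ h).symm

theorem IsVC.liftCover_of_reduceCliques {X' : Set {w : V // w ≠ v ∧ w ∉ C₂}}
    (hX' : IsVC (ReduceCliques G v C₁ C₂) X') {a : {w : V // w ≠ v ∧ w ∉ C₂}} (ha : a.1 ∈ C₁)
    (haX : a ∉ X') {b : V} (hb : b ∈ C₂) (hab : ¬ G.Adj a.1 b) :
    IsVC G (liftCover v C₂ b X') := by
  have outside : ∀ x ∉ liftCover v C₂ b X', x = b ∨ ∃ hx : x ≠ v ∧ x ∉ C₂, ⟨x, hx⟩ ∉ X' := by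
    intro x hx
    simp only [liftCover, Set.mem_insert_iff, Set.mem_union, Set.mem_image,
      Set.mem_sdiff, Finset.mem_coe, Set.mem_singleton_iff, not_or] at hx
    obtain ⟨hxv, hxX, hxC⟩ := hx
    by_cases hxb : x = b
    · exact Or.inl hxb
    · exact Or.inr ⟨⟨hxv, fun h => hxC ⟨h, hxb⟩⟩, fun h => hxX ⟨_, h, rfl⟩⟩
  have from_b : ∀ w (hw : w ≠ v ∧ w ∉ C₂), G.Adj b w → ⟨w, hw⟩ ∈ X' := by
    intro w hw hbw
    have hne : a ≠ ⟨w, hw⟩ := by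
      rintro rfl
      exact hab hbw.symm
    have hadj : (ReduceCliques G v C₁ C₂).Adj a ⟨w, hw⟩ := by
      rw [ReduceCliques, SimpleGraph.fromRel_adj]
      exact ⟨hne, Or.inl (Or.inr ⟨ha, b, hb, hab, hbw⟩)⟩
    exact (hX' hadj).resolve_left haX
  intro u w huw
  by_contra! h
  rcases outside u h.1 with rfl | ⟨hu, huX⟩ <;> rcases outside w h.2 with rfl | ⟨hw, hwX⟩
  · exact G.irrefl huw
  · exact hwX (from_b w hw huw)
  · exact huX (from_b u hu huw.symm)
  · have hadj : (ReduceCliques G v C₁ C₂).Adj ⟨u, hu⟩ ⟨w, hw⟩ := by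
      rw [ReduceCliques, SimpleGraph.fromRel_adj]
      exact ⟨fun h => huw.ne (congrArg Subtype.val h), Or.inl (Or.inl huw)⟩
    exact (hX' hadj).elim huX hwX

theorem IsVC.partner_not_mem {X : Set V} (hX : IsVC G X)
    (hM : ∀ c₁ ∈ C₁, ∃! c₂, c₂ ∈ C₂ ∧ ¬ G.Adj c₁ c₂) {a b : V} (ha : ↑C₁ \ X = {a})
    (hb : ↑C₂ \ X = {b}) :
    ∀ c₁ ∈ C₁, ∀ c₂ ∈ C₂, ¬ G.Adj c₁ c₂ → c₁ ∉ X → c₂ ∉ X := by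
  intro c₁ hc₁ c₂ hc₂ hnadj hc₁X
  obtain ⟨haC, haX⟩ : a ∈ (↑C₁ \ X : Set V) := ha.symm.subset rfl
  obtain ⟨hbC, hbX⟩ : b ∈ (↑C₂ \ X : Set V) := hb.symm.subset rfl
  obtain rfl : c₁ = a := ha.subset ⟨hc₁, hc₁X⟩
  obtain rfl : c₂ = b :=
    (hM c₁ hc₁).unique ⟨hc₂, hnadj⟩ ⟨hbC, fun h => (hX h).elim haX hbX⟩
  exact hbX

end

theorem stmt_13_general {V : Type*} [Fintype V] (G : SimpleGraph V) (k : ℕ)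
    (v : V) (C₁ C₂ : Finset V)
    (hpart : (↑C₁ ∪ ↑C₂ : Set V) = G.neighborSet v) (hdisj : Disjoint C₁ C₂)
    (hk : C₂.card ≤ k)
    (hM : ∀ c₁ ∈ C₁, ∃! c₂, c₂ ∈ C₂ ∧ ¬ G.Adj c₁ c₂) :
    (∃ X : Set V, IsVC G X ∧ X.ncard = k ∧
      ((↑C₁ : Set V) \ X).ncard = 1 ∧ ((↑C₂ : Set V) \ X).ncard = 1) ↔
    (∃ X' : Set {w : V // w ≠ v ∧ w ∉ C₂}, IsVC (ReduceCliques G v C₁ C₂) X' ∧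
      X'.ncard = k - C₂.card ∧ ((↑C₁ : Set V) \ (Subtype.val '' X')).ncard = 1) := by
  have hv₁ : v ∉ (↑C₁ : Set V) := fun h => G.irrefl (hpart.subset (Or.inl h))
  have hv₂ : v ∉ C₂ := fun h => G.irrefl (hpart.subset (Or.inr h))
  have hdisj' : Disjoint (↑C₁ : Set V) ↑C₂ := Finset.disjoint_coe.mpr hdisj
  constructor
  · rintro ⟨X, hX, rfl, h₁, h₂⟩
    obtain ⟨a, ha⟩ := Set.ncard_eq_one.mp h₁
    obtain ⟨b, hb⟩ := Set.ncard_eq_one.mp h₂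
    obtain ⟨hbC, hbX⟩ : b ∈ (↑C₂ \ X : Set V) := hb.symm.subset rfl
    have hvX : v ∈ X := (hX (hpart.subset (Or.inr hbC))).resolve_right hbX
    have hlift := ReduceCliques.liftCover_preimage hvX hb
    refine ⟨_, hX.preimage_reduceCliques (hX.partner_not_mem hM ha hb), ?_, ?_⟩
    · have := ReduceCliques.ncard_liftCover hv₂ hbC (Subtype.val ⁻¹' X)
      rw [hlift] at this
      omega
    · rwa [← ReduceCliques.sdiff_liftCover_of_disjoint hv₁ hdisj' b, hlift]
  · rintro ⟨X', hX', hcard', h₁⟩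
    obtain ⟨a, ha⟩ := Set.ncard_eq_one.mp h₁
    obtain ⟨haC, haX⟩ : a ∈ (↑C₁ \ Subtype.val '' X' : Set V) := ha.symm.subset rfl
    obtain ⟨b, ⟨hbC, hab⟩, -⟩ := hM a haC
    have haS : a ≠ v ∧ a ∉ C₂ := ⟨ne_of_mem_of_not_mem haC hv₁, Finset.disjoint_left.mp hdisj haC⟩
    refine ⟨ReduceCliques.liftCover v C₂ b X', hX'.liftCover_of_reduceCliques (a := ⟨a, haS⟩)
      haC (fun h => haX ⟨_, h, rfl⟩) hbC hab, ?_, ?_, ?_⟩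
    · rw [ReduceCliques.ncard_liftCover hv₂ hbC]
      omega
    · rwa [ReduceCliques.sdiff_liftCover_of_disjoint hv₁ hdisj' b]
    · rw [ReduceCliques.coe_sdiff_liftCover hv₂ hbC, Set.ncard_singleton]

theorem stmt_13 {V : Type*} [Fintype V] [DecidableEq V] (G : SimpleGraph V) (k : ℕ)
    (v : V) (C₁ C₂ : Finset V)
    (hpart : (↑C₁ ∪ ↑C₂ : Set V) = G.neighborSet v) (hdisj : Disjoint C₁ C₂)
    (hcard : C₂.card ≤ C₁.card) (hC₂ne : 1 ≤ C₂.card) (hk : C₂.card ≤ k)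
    (hclique₁ : G.IsClique ↑C₁) (hclique₂ : G.IsClique ↑C₂)
    (hM : ∀ c₁ ∈ C₁, ∃! c₂, c₂ ∈ C₂ ∧ ¬ G.Adj c₁ c₂) :
    (∃ X : Set V, IsVC G X ∧ X.ncard = k ∧
      ((↑C₁ : Set V) \ X).ncard = 1 ∧ ((↑C₂ : Set V) \ X).ncard = 1) ↔
    (∃ X' : Set {w : V // w ≠ v ∧ w ∉ C₂}, IsVC (ReduceCliques G v C₁ C₂) X' ∧
      X'.ncard = k - C₂.card ∧ ((↑C₁ : Set V) \ (Subtype.val '' X')).ncard = 1) :=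
  stmt_13_general G k v C₁ C₂ hpart hdisj hk hM
end

section
/- Let G be a finite simple graph, k a natural number, and v a vertex of G of degree exactly 4 with N(v) = {a, b, c, d} such that the only edges of G among {a, b, c, d} are {a, b}, {b, c} and {c, d} (i.e., the induced subgraph on N(v) is the path a–b–c–d). Let G' be the graph with vertex set V(G) \ {v} whose edge set consists of all edges of G between vertices of V(G) \ {v}, together with all six pairs of distinct vertices from {a, b, c, d} as edges, all edges {x, y} with x ∈ {a, b} and y ∈ N_G(d) \ {v, x}, and all edges {x, y} with x ∈ {c, d} and y ∈ N_G(a) \ {v, x}. Then G has a vertex cover of size at most k if and only if G' has a vertex cover of size at most k. -/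
/-- The graph `G'` on `V(G) \ {v}` whose edges are those of `G` between vertices of
`V(G) \ {v}`, together with all six pairs of distinct vertices from `{a, b, c, d}`,
all edges `{x, y}` with `x ∈ {a, b}` and `y ∈ N_G(d) \ {v, x}`, and all edges `{x, y}`
with `x ∈ {c, d}` and `y ∈ N_G(a) \ {v, x}`. -/
def ReduceDegFour {V : Type*} (G : SimpleGraph V) (v a b c d : V) :
    SimpleGraph {w : V // w ≠ v} :=
  SimpleGraph.fromRel (fun w w' =>
    G.Adj w.1 w'.1 ∨
    (w.1 ∈ ({a, b, c, d} : Set V) ∧ w'.1 ∈ ({a, b, c, d} : Set V)) ∨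
    ((w.1 = a ∨ w.1 = b) ∧ G.Adj d w'.1) ∨
    ((w.1 = c ∨ w.1 = d) ∧ G.Adj a w'.1))

/-!
A vertex missing from a vertex cover of `G` has all its neighbours in the cover. Hence a cover `X`
of `G` containing `v` can trade `v` for a vertex of `N(v)` and become a cover of `G'`: for `a` if
`a ∉ X`, else for `d` if `d ∉ X` (the new edges at `N(a)`, resp. `N(d)`, are then covered from the
other side), else for whichever of `b, c` is missing. Conversely, a cover `Y` of `G'` misses at
most one vertex of the clique `{a, b, c, d}`. If it misses `a` or `b`, the new edges from that
vertex to `N(d)` force `d` and `N(d) \ {v}` into `Y`, so trading `d` for `v` gives a cover of `G`;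
if it contains `a` and `b` but misses `c` or `d`, the same works with `a` in place of `d`.
-/

open Set

theorem ncard_insert_sdiff_singleton_le {α : Type*} {s : Set α} {a b : α} (hb : b ∈ s)
    (hab : a ≠ b) : (insert a (s \ {b})).ncard ≤ s.ncard := by
  by_cases ha : a ∈ s
  · rw [insert_eq_of_mem (show a ∈ s \ {b} from ⟨ha, hab⟩)]
    exact ncard_sdiff_singleton_le s b
  · exact (ncard_exchange ha hb).le

section VertexCover

variable {V : Type*} {G : SimpleGraph V} {X Y : Set V}

theorem IsVC.mono (hX : IsVC G X) (h : X ⊆ Y) : IsVC G Y :=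
  fun _ _ huw => (hX huw).imp (fun hu => h hu) (fun hw => h hw)

theorem IsVC.neighborSet_subset_s17 (hX : IsVC G X) {x : V} (hx : x ∉ X) : G.neighborSet x ⊆ X :=
  fun _ hy => (hX hy).resolve_left hx

theorem IsVC.of_insert {x : V} (hX : IsVC G (insert x X)) (hx : G.neighborSet x ⊆ X) :
    IsVC G X := by
  intro u w huw
  rcases hX huw with (rfl | hu) | (rfl | hw)
  · exact Or.inr (hx huw)
  · exact Or.inl hu
  · exact Or.inl (hx huw.symm)
  · exact Or.inr hw

-- `IsVC G (insert v Y)` encodes that `Y` covers `G - v`.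
theorem IsVC.exchange {v r : V} (hY : IsVC G (insert v Y)) (hr : G.neighborSet r \ {v} ⊆ Y) :
    IsVC G (insert v (Y \ {r})) := by
  refine IsVC.of_insert (x := r) (hY.mono ?_) fun y hy => ?_
  · rw [insert_comm, insert_sdiff_singleton]
    exact insert_subset_insert (subset_insert r Y)
  · by_cases hyv : y = v
    · exact Or.inl hyv
    · exact Or.inr ⟨hr ⟨hy, hyv⟩, (G.ne_of_adj hy).symm⟩

theorem HasVC.of_exchange {v r : V} {k : ℕ} (hY : IsVC G (insert v Y)) (hvY : v ∉ Y)
    (hrY : r ∈ Y) (hr : G.neighborSet r \ {v} ⊆ Y) (hk : Y.ncard ≤ k) : HasVC G k :=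
  ⟨_, hY.exchange hr, (ncard_exchange hvY hrY).trans_le hk⟩

theorem isVC_fromRel_iff {r : V → V → Prop} :
    IsVC (SimpleGraph.fromRel r) X ↔ ∀ ⦃u w⦄, u ≠ w → r u w → u ∈ X ∨ w ∈ X := by
  refine ⟨fun hX u w huw h => hX ((SimpleGraph.fromRel_adj r u w).2 ⟨huw, Or.inl h⟩), ?_⟩
  intro hX u w huw
  obtain ⟨huw, h | h⟩ := (SimpleGraph.fromRel_adj r u w).1 huw
  · exact hX huw h
  · exact (hX huw.symm h).symm

theorem ncard_preimage_val_insert_le {v z : V} (hv : v ∈ X) (hzv : z ≠ v) :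
    (Subtype.val ⁻¹' insert z X : Set {w : V // w ≠ v}).ncard ≤ X.ncard := by
  have hpre : (Subtype.val ⁻¹' insert z X : Set {w : V // w ≠ v}) =
      Subtype.val ⁻¹' insert z (X \ {v}) := by
    ext w
    simp [w.2]
  rw [hpre, ncard_preimage_of_injective_subset_range Subtype.val_injective]
  · exact ncard_insert_sdiff_singleton_le hv hzv
  · rw [Subtype.range_coe_subtype]
    rintro w (rfl | ⟨-, hw⟩)
    exacts [hzv, hw]

end VertexCover

namespace ReduceDegFour

variable {V : Type*} {G : SimpleGraph V} {v a b c d : V} {X Y : Set V}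

theorem isVC_preimage_iff :
    IsVC (ReduceDegFour G v a b c d) (Subtype.val ⁻¹' Y) ↔
      ∀ ⦃x y : V⦄, x ≠ v → y ≠ v → x ≠ y →
        (G.Adj x y ∨ (x ∈ ({a, b, c, d} : Set V) ∧ y ∈ ({a, b, c, d} : Set V)) ∨
          ((x = a ∨ x = b) ∧ G.Adj d y) ∨ ((x = c ∨ x = d) ∧ G.Adj a y)) →
        x ∈ Y ∨ y ∈ Y := by
  rw [ReduceDegFour, isVC_fromRel_iff]
  exact ⟨fun h x y hx hy hxy => @h ⟨x, hx⟩ ⟨y, hy⟩ (fun e => hxy (congrArg Subtype.val e)),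
    fun h x y hxy => h x.2 y.2 (Subtype.val_injective.ne hxy)⟩

theorem isVC_preimage_of {w : V} (hY : IsVC G (insert v Y))
    (hS : ({a, b, c, d} : Set V) ⊆ insert w Y)
    (hd : a ∈ Y ∧ b ∈ Y ∨ G.neighborSet d \ {v} ⊆ Y)
    (ha : c ∈ Y ∧ d ∈ Y ∨ G.neighborSet a \ {v} ⊆ Y) :
    IsVC (ReduceDegFour G v a b c d) (Subtype.val ⁻¹' Y) := by
  rw [isVC_preimage_iff]
  rintro x y hx hy hxy (hG | ⟨hxS, hyS⟩ | ⟨hx', hy'⟩ | ⟨hx', hy'⟩)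
  · simpa [hx, hy] using hY hG
  · rcases hS hxS with rfl | hxY
    · exact Or.inr ((hS hyS).resolve_left hxy.symm)
    · exact Or.inl hxY
  · rcases hd with ⟨haY, hbY⟩ | hNd
    · rcases hx' with rfl | rfl
      exacts [Or.inl haY, Or.inl hbY]
    · exact Or.inr (hNd ⟨hy', hy⟩)
  · rcases ha with ⟨hcY, hdY⟩ | hNa
    · rcases hx' with rfl | rfl
      exacts [Or.inl hcY, Or.inl hdY]
    · exact Or.inr (hNa ⟨hy', hy⟩)

theorem isVC_insert_of_isVC_preimage
    (hY : IsVC (ReduceDegFour G v a b c d) (Subtype.val ⁻¹' Y)) :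
    IsVC G (insert v Y) := by
  intro u w huw
  by_cases hu : u = v
  · exact Or.inl (Or.inl hu)
  by_cases hw : w = v
  · exact Or.inr (Or.inl hw)
  exact (isVC_preimage_iff.1 hY hu hw huw.ne (Or.inl huw)).imp
    (mem_insert_of_mem v) (mem_insert_of_mem v)

theorem mem_of_notMem (hY : IsVC (ReduceDegFour G v a b c d) (Subtype.val ⁻¹' Y)) {x y : V}
    (hx : x ∈ ({a, b, c, d} : Set V)) (hy : y ∈ ({a, b, c, d} : Set V)) (hxv : x ≠ v)
    (hyv : y ≠ v) (hxy : x ≠ y) (hxY : x ∉ Y) : y ∈ Y :=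
  (isVC_preimage_iff.1 hY hxv hyv hxy (Or.inr (Or.inl ⟨hx, hy⟩))).resolve_left hxY

theorem neighborSet_sdiff_subset_of_left
    (hY : IsVC (ReduceDegFour G v a b c d) (Subtype.val ⁻¹' Y))
    (hav : a ≠ v) (hbv : b ≠ v) (hnad : ¬ G.Adj a d) (hnbd : ¬ G.Adj b d)
    (hab : ¬ (a ∈ Y ∧ b ∈ Y)) : G.neighborSet d \ {v} ⊆ Y := by
  obtain ⟨x, hx, hxv, hxd, hxY⟩ : ∃ x, (x = a ∨ x = b) ∧ x ≠ v ∧ ¬ G.Adj x d ∧ x ∉ Y := by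
    rcases not_and_or.1 hab with haY | hbY
    exacts [⟨a, Or.inl rfl, hav, hnad, haY⟩, ⟨b, Or.inr rfl, hbv, hnbd, hbY⟩]
  rintro y ⟨hy, hyv⟩
  have hxy : x ≠ y := by
    rintro rfl
    exact hxd hy.symm
  exact (isVC_preimage_iff.1 hY hxv hyv hxy (Or.inr (Or.inr (Or.inl ⟨hx, hy⟩)))).resolve_left hxY

theorem neighborSet_sdiff_subset_of_right
    (hY : IsVC (ReduceDegFour G v a b c d) (Subtype.val ⁻¹' Y))
    (hcv : c ≠ v) (hdv : d ≠ v) (hnac : ¬ G.Adj a c) (hnad : ¬ G.Adj a d)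
    (hcd : ¬ (c ∈ Y ∧ d ∈ Y)) : G.neighborSet a \ {v} ⊆ Y := by
  obtain ⟨x, hx, hxv, hax, hxY⟩ : ∃ x, (x = c ∨ x = d) ∧ x ≠ v ∧ ¬ G.Adj a x ∧ x ∉ Y := by
    rcases not_and_or.1 hcd with hcY | hdY
    exacts [⟨c, Or.inl rfl, hcv, hnac, hcY⟩, ⟨d, Or.inr rfl, hdv, hnad, hdY⟩]
  rintro y ⟨hy, hyv⟩
  have hxy : x ≠ y := by
    rintro rfl
    exact hax hy
  exact (isVC_preimage_iff.1 hY hxv hyv hxy (Or.inr (Or.inr (Or.inr ⟨hx, hy⟩)))).resolve_left hxY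

theorem ne_of_neighborSet_eq (hN : G.neighborSet v = {a, b, c, d}) :
    a ≠ v ∧ b ≠ v ∧ c ≠ v ∧ d ≠ v := by
  have hvS : v ∉ ({a, b, c, d} : Set V) := hN ▸ G.notMem_neighborSet_self
  simp only [mem_insert_iff, mem_singleton_iff, not_or] at hvS
  exact ⟨Ne.symm hvS.1, Ne.symm hvS.2.1, Ne.symm hvS.2.2.1, Ne.symm hvS.2.2.2⟩

theorem hasVC_of_notMem {k : ℕ} (hN : G.neighborSet v = {a, b, c, d}) (hX : IsVC G X)
    (hv : v ∉ X) (hk : X.ncard ≤ k) : HasVC (ReduceDegFour G v a b c d) k := by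
  have hS : ({a, b, c, d} : Set V) ⊆ X := hN ▸ hX.neighborSet_subset_s17 hv
  refine ⟨Subtype.val ⁻¹' X, isVC_preimage_of (w := a) (hX.mono (subset_insert v X))
    (hS.trans (subset_insert a X)) (Or.inl ⟨hS (by simp), hS (by simp)⟩)
    (Or.inl ⟨hS (by simp), hS (by simp)⟩), ?_⟩
  rw [ncard_preimage_of_injective_subset_range Subtype.val_injective]
  · exact hk
  · rw [Subtype.range_coe_subtype]
    exact fun x hx => ne_of_mem_of_not_mem hx hv

theorem hasVC_of_exchange {k : ℕ} {z w : V} (hX : IsVC G X) (hv : v ∈ X) (hzv : z ≠ v)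
    (hk : X.ncard ≤ k) (hS : ({a, b, c, d} : Set V) ⊆ insert w (insert z X))
    (hd : a ∈ insert z X ∧ b ∈ insert z X ∨ G.neighborSet d \ {v} ⊆ insert z X)
    (ha : c ∈ insert z X ∧ d ∈ insert z X ∨ G.neighborSet a \ {v} ⊆ insert z X) :
    HasVC (ReduceDegFour G v a b c d) k :=
  ⟨_, isVC_preimage_of (hX.mono ((subset_insert z X).trans (subset_insert v _))) hS hd ha,
    (ncard_preimage_val_insert_le hv hzv).trans hk⟩

theorem hasVC_of_mem {k : ℕ} (hab : G.Adj a b) (hbc : G.Adj b c) (hcd : G.Adj c d)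
    (hav : a ≠ v) (hbv : b ≠ v) (hcv : c ≠ v) (hdv : d ≠ v) (hX : IsVC G X) (hv : v ∈ X)
    (hk : X.ncard ≤ k) : HasVC (ReduceDegFour G v a b c d) k := by
  have hNX {x : V} (hx : x ∉ X) : G.neighborSet x \ {v} ⊆ insert x X :=
    sdiff_subset.trans ((hX.neighborSet_subset_s17 hx).trans (subset_insert x X))
  by_cases haX : a ∈ X
  · by_cases hdX : d ∈ X
    · rcases hX hbc with hbX | hcX
      · exact hasVC_of_exchange (z := c) (w := a) hX hv hcv hk
          (by simp [insert_subset_iff, haX, hbX, hdX]) (Or.inl (by simp [haX, hbX]))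
          (Or.inl (by simp [hdX]))
      · exact hasVC_of_exchange (z := b) (w := a) hX hv hbv hk
          (by simp [insert_subset_iff, haX, hcX, hdX]) (Or.inl (by simp [haX]))
          (Or.inl (by simp [hcX, hdX]))
    · have hcX : c ∈ X := (hX hcd).resolve_right hdX
      exact hasVC_of_exchange (z := d) (w := b) hX hv hdv hk
        (by simp [insert_subset_iff, haX, hcX]) (Or.inr (hNX hdX)) (Or.inl (by simp [hcX]))
  · have hbX : b ∈ X := (hX hab).resolve_left haX
    rcases hX hcd with hcX | hdX
    · exact hasVC_of_exchange (z := a) (w := d) hX hv hav hk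
        (by simp [insert_subset_iff, hbX, hcX]) (Or.inl (by simp [hbX])) (Or.inr (hNX haX))
    · exact hasVC_of_exchange (z := a) (w := c) hX hv hav hk
        (by simp [insert_subset_iff, hbX, hdX]) (Or.inl (by simp [hbX])) (Or.inr (hNX haX))

theorem _root_.HasVC.reduceDegFour {k : ℕ}
    (hN : G.neighborSet v = {a, b, c, d}) (hab : G.Adj a b) (hbc : G.Adj b c)
    (hcd : G.Adj c d) (h : HasVC G k) : HasVC (ReduceDegFour G v a b c d) k := by
  obtain ⟨X, hX, hk⟩ := h
  obtain ⟨hav, hbv, hcv, hdv⟩ := ne_of_neighborSet_eq hN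
  by_cases hv : v ∈ X
  · exact hasVC_of_mem hab hbc hcd hav hbv hcv hdv hX hv hk
  · exact hasVC_of_notMem hN hX hv hk

theorem _root_.HasVC.of_reduceDegFour {k : ℕ}
    (hN : G.neighborSet v = {a, b, c, d}) (had : a ≠ d) (hbd : b ≠ d)
    (hnac : ¬ G.Adj a c) (hnad : ¬ G.Adj a d) (hnbd : ¬ G.Adj b d)
    (h : HasVC (ReduceDegFour G v a b c d) k) : HasVC G k := by
  obtain ⟨X', hX', hk⟩ := h
  obtain ⟨hav, hbv, hcv, hdv⟩ := ne_of_neighborSet_eq hN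
  set Y : Set V := Subtype.val '' X'
  have hvY : v ∉ Y := fun ⟨x, _, hx⟩ => x.2 hx
  rw [← preimage_image_eq X' Subtype.val_injective] at hX'
  rw [← ncard_image_of_injective X' Subtype.val_injective] at hk
  have hY : IsVC G (insert v Y) := isVC_insert_of_isVC_preimage hX'
  by_cases hab : a ∈ Y ∧ b ∈ Y
  · by_cases hcd : c ∈ Y ∧ d ∈ Y
    · refine ⟨Y, hY.of_insert ?_, hk⟩
      simp [hN, insert_subset_iff, hab.1, hab.2, hcd.1, hcd.2]
    · exact HasVC.of_exchange hY hvY hab.1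
        (neighborSet_sdiff_subset_of_right hX' hcv hdv hnac hnad hcd) hk
  · have hdY : d ∈ Y := by
      rcases not_and_or.1 hab with haY | hbY
      · exact mem_of_notMem hX' (by simp) (by simp) hav hdv had haY
      · exact mem_of_notMem hX' (by simp) (by simp) hbv hdv hbd hbY
    exact HasVC.of_exchange hY hvY hdY
      (neighborSet_sdiff_subset_of_left hX' hav hbv hnad hnbd hab) hk

end ReduceDegFour

theorem stmt_17_general {V : Type*} (G : SimpleGraph V) (k : ℕ)
    (v a b c d : V)
    (had : a ≠ d) (hbd : b ≠ d)
    (hN : G.neighborSet v = {a, b, c, d})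
    -- the only edges among {a, b, c, d} are {a, b}, {b, c} and {c, d}
    (hab : G.Adj a b) (hbc : G.Adj b c) (hcd : G.Adj c d)
    (hnac : ¬ G.Adj a c) (hnad : ¬ G.Adj a d) (hnbd : ¬ G.Adj b d) :
    HasVC G k ↔ HasVC (ReduceDegFour G v a b c d) k :=
  ⟨HasVC.reduceDegFour hN hab hbc hcd, HasVC.of_reduceDegFour hN had hbd hnac hnad hnbd⟩

theorem stmt_17 {V : Type*} [Fintype V] (G : SimpleGraph V) (k : ℕ)
    (v a b c d : V)
    (hac : a ≠ c) (had : a ≠ d) (hbd : b ≠ d)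
    (hN : G.neighborSet v = {a, b, c, d})
    -- the only edges among {a, b, c, d} are {a, b}, {b, c} and {c, d}
    (hab : G.Adj a b) (hbc : G.Adj b c) (hcd : G.Adj c d)
    (hnac : ¬ G.Adj a c) (hnad : ¬ G.Adj a d) (hnbd : ¬ G.Adj b d) :
    HasVC G k ↔ HasVC (ReduceDegFour G v a b c d) k :=
  stmt_17_general G k v a b c d had hbd hN hab hbc hcd hnac hnad hnbd
end

section
/- Let t and c be natural numbers, let G be a strongly t-boundaried finite simple graph, and let H and H' be t-boundaried finite simple graphs that are c-equivalent, i.e., P_H(X) = P_{H'}(X) + c for every subset X of {1, …, t}. Then for every natural number k ≥ c, the glued graph G ⊕ H has a vertex cover of size at most k if and only if the glued graph G ⊕ H' has a vertex cover of size at most k − c. -/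
/-- A `t`-boundaried graph: a finite simple graph together with `t` distinguished
distinct non-isolated boundary vertices. -/
structure BGraph (t : ℕ) where
  Vtx : Type
  fin : Fintype Vtx
  G : SimpleGraph Vtx
  bd : Fin t → Vtx
  bd_inj : Function.Injective bd
  bd_nonisolated : ∀ i, ∃ w, G.Adj (bd i) w

/-- A `t`-boundaried graph is strongly `t`-boundaried if its boundary is independent. -/
def BGraph.Strong {t : ℕ} (B : BGraph t) : Prop :=
  ∀ i j, ¬ B.G.Adj (B.bd i) (B.bd j)

/-- Vertices of the glued graph `G ⊕ H`: the vertices of `G` (including the identified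
boundary) plus the non-boundary vertices of `H`. -/
def GlueVtx {t : ℕ} (Gb Hb : BGraph t) : Type :=
  Gb.Vtx ⊕ {w : Hb.Vtx // ∀ i, w ≠ Hb.bd i}

/-- The glued graph `G ⊕ H`: identify the boundaries of `G` and `H` and take the union
of the edges of `G` and of `H`. -/
def glue {t : ℕ} (Gb Hb : BGraph t) : SimpleGraph (GlueVtx Gb Hb) :=
  SimpleGraph.fromRel (fun p q =>
    match p, q with
    | Sum.inl u, Sum.inl u' =>
        Gb.G.Adj u u' ∨
          ∃ i j, u = Gb.bd i ∧ u' = Gb.bd j ∧ Hb.G.Adj (Hb.bd i) (Hb.bd j)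
    | Sum.inl u, Sum.inr w => ∃ i, u = Gb.bd i ∧ Hb.G.Adj (Hb.bd i) w.1
    | Sum.inr w, Sum.inr w' => Hb.G.Adj w.1 w'.1
    | Sum.inr _, Sum.inl _ => False)

/-- `S ⊆ V(G ⊕ H)` is compatible with `X ⊆ [t]` in `G`:
`N_G(x_i) ⊆ S ↔ i ∈ X` for all `i`. -/
def Compatible {t : ℕ} (Gb Hb : BGraph t) (S : Set (GlueVtx Gb Hb))
    (X : Set (Fin t)) : Prop :=
  ∀ i : Fin t, ((∀ u : Gb.Vtx, Gb.G.Adj (Gb.bd i) u → Sum.inl u ∈ S) ↔ i ∈ X)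

/-- The vertices of `H` inside the glued graph `G ⊕ H`: the (identified) boundary
vertices together with the non-boundary vertices of `H`. -/
def HPart {t : ℕ} (Gb Hb : BGraph t) : Set (GlueVtx Gb Hb) :=
  {p | (∃ i, p = Sum.inl (Gb.bd i)) ∨ ∃ w, p = Sum.inr w}

/-- The profile `P_H^G(X)`: the minimum of `|S ∩ V(H)|` over all vertex covers `S` of
`G ⊕ H` compatible with `X` in `G` (`∞` if there is no such vertex cover). -/
noncomputable def profile {t : ℕ} (Gb Hb : BGraph t) (X : Set (Fin t)) : ℕ∞ :=
  sInf {n : ℕ∞ | ∃ S : Set (GlueVtx Gb Hb),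
    IsVC (glue Gb Hb) S ∧ Compatible Gb Hb S X ∧ n = ((S ∩ HPart Gb Hb).ncard : ℕ∞)}


-- auxiliary lemmas

lemma glueFinite {t : ℕ} (Gb Hb : BGraph t) : Finite (GlueVtx Gb Hb) := by
  haveI := Gb.fin; haveI := Hb.fin
  unfold GlueVtx; infer_instance

lemma glue_adj_G {t : ℕ} (Gb Hb : BGraph t) {u u' : Gb.Vtx} (h : Gb.G.Adj u u') :
    (glue Gb Hb).Adj (Sum.inl u) (Sum.inl u') := by
  refine (SimpleGraph.fromRel_adj _ _ _).mpr ?_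
  exact ⟨fun hc => h.ne (Sum.inl.inj hc), Or.inl (Or.inl h)⟩

lemma profile_le {t : ℕ} (Gb Hb : BGraph t) (X : Set (Fin t)) (S : Set (GlueVtx Gb Hb))
    (h1 : IsVC (glue Gb Hb) S) (h2 : Compatible Gb Hb S X) :
    profile Gb Hb X ≤ ((S ∩ HPart Gb Hb).ncard : ℕ∞) :=
  sInf_le ⟨S, h1, h2, rfl⟩

lemma profile_attained {t : ℕ} (Gb Hb : BGraph t) (X : Set (Fin t))
    (h : profile Gb Hb X ≠ ⊤) :
    ∃ S, IsVC (glue Gb Hb) S ∧ Compatible Gb Hb S X ∧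
      profile Gb Hb X = ((S ∩ HPart Gb Hb).ncard : ℕ∞) := by
  have hne : {n : ℕ∞ | ∃ S : Set (GlueVtx Gb Hb),
      IsVC (glue Gb Hb) S ∧ Compatible Gb Hb S X ∧
        n = ((S ∩ HPart Gb Hb).ncard : ℕ∞)}.Nonempty := by
    by_contra hc
    rw [Set.not_nonempty_iff_eq_empty] at hc
    apply h
    unfold profile
    rw [hc, sInf_empty]
  obtain ⟨S, h1, h2, h3⟩ := csInf_mem hne
  exact ⟨S, h1, h2, h3⟩

lemma transfer {t : ℕ} (Gb Hb Hb' : BGraph t) (hG : Gb.Strong)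
    (S : Set (GlueVtx Gb Hb)) (hS : IsVC (glue Gb Hb) S)
    (S' : Set (GlueVtx Gb Hb')) (hS' : IsVC (glue Gb Hb') S')
    (hcomp : Compatible Gb Hb' S'
      {i | ∀ u : Gb.Vtx, Gb.G.Adj (Gb.bd i) u → Sum.inl u ∈ S}) :
    ∃ T : Set (GlueVtx Gb Hb'), IsVC (glue Gb Hb') T ∧
      T.ncard ≤ (S \ HPart Gb Hb).ncard + (S' ∩ HPart Gb Hb').ncard := by
  haveI := glueFinite Gb Hb
  haveI := glueFinite Gb Hb'
  set U : Set Gb.Vtx := {u | Sum.inl u ∈ S ∧ ∀ i, u ≠ Gb.bd i} with hU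
  refine ⟨(Sum.inl '' U) ∪ (S' ∩ HPart Gb Hb'), ?_, ?_⟩
  · -- vertex cover
    have key : ∀ (i : Fin t) (u' : Gb.Vtx), Gb.G.Adj (Gb.bd i) u' →
        Sum.inl u' ∉ S → (Sum.inl (Gb.bd i) : GlueVtx Gb Hb') ∈ S' := by
      intro i u' hadj hnot
      have hiX : i ∉ {i | ∀ u : Gb.Vtx, Gb.G.Adj (Gb.bd i) u → Sum.inl u ∈ S} :=
        fun h => hnot (h u' hadj)
      have h2 : ¬ ∀ u : Gb.Vtx, Gb.G.Adj (Gb.bd i) u →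
          (Sum.inl u : GlueVtx Gb Hb') ∈ S' := fun h => hiX ((hcomp i).mp h)
      push_neg at h2
      obtain ⟨v, hv, hvS'⟩ := h2
      rcases hS' (glue_adj_G Gb Hb' hv) with h | h
      · exact h
      · exact absurd h hvS'
    have coverG : ∀ u u' : Gb.Vtx, Gb.G.Adj u u' →
        (Sum.inl u : GlueVtx Gb Hb') ∈ (Sum.inl '' U) ∪ (S' ∩ HPart Gb Hb') ∨
        (Sum.inl u' : GlueVtx Gb Hb') ∈ (Sum.inl '' U) ∪ (S' ∩ HPart Gb Hb') := by
      intro u u' huu'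
      rcases hS (glue_adj_G Gb Hb huu') with hu | hu
      · by_cases hb : ∀ i, u ≠ Gb.bd i
        · exact Or.inl (Or.inl ⟨u, ⟨hu, hb⟩, rfl⟩)
        · push_neg at hb
          obtain ⟨i, rfl⟩ := hb
          by_cases hu' : Sum.inl u' ∈ S
          · have hb' : ∀ j, u' ≠ Gb.bd j := fun j hj => hG i j (hj ▸ huu')
            exact Or.inr (Or.inl ⟨u', ⟨hu', hb'⟩, rfl⟩)
          · exact Or.inl (Or.inr ⟨key i u' huu' hu', Or.inl ⟨i, rfl⟩⟩)
      · by_cases hb : ∀ i, u' ≠ Gb.bd i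
        · exact Or.inr (Or.inl ⟨u', ⟨hu, hb⟩, rfl⟩)
        · push_neg at hb
          obtain ⟨i, rfl⟩ := hb
          by_cases hu' : Sum.inl u ∈ S
          · have hb' : ∀ j, u ≠ Gb.bd j := fun j hj => hG i j (hj ▸ huu'.symm)
            exact Or.inl (Or.inl ⟨u, ⟨hu', hb'⟩, rfl⟩)
          · exact Or.inr (Or.inr ⟨key i u huu'.symm hu', Or.inl ⟨i, rfl⟩⟩)
    intro p q hadj
    have hadj' := hadj
    rw [glue, SimpleGraph.fromRel_adj] at hadj'
    obtain ⟨hne, hrel⟩ := hadj'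
    match p, q with
    | Sum.inl u, Sum.inl u' =>
      rcases hrel with (h | h) | (h | h)
      · exact coverG u u' h
      · obtain ⟨i, j, rfl, rfl, _⟩ := h
        rcases hS' hadj with h | h
        · exact Or.inl (Or.inr ⟨h, Or.inl ⟨i, rfl⟩⟩)
        · exact Or.inr (Or.inr ⟨h, Or.inl ⟨j, rfl⟩⟩)
      · exact (coverG u' u h).symm
      · obtain ⟨i, j, rfl, rfl, _⟩ := h
        rcases hS' hadj with h | h
        · exact Or.inl (Or.inr ⟨h, Or.inl ⟨j, rfl⟩⟩)
        · exact Or.inr (Or.inr ⟨h, Or.inl ⟨i, rfl⟩⟩)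
    | Sum.inl u, Sum.inr w =>
      rcases hrel with h | h
      · obtain ⟨i, rfl, _⟩ := h
        rcases hS' hadj with h | h
        · exact Or.inl (Or.inr ⟨h, Or.inl ⟨i, rfl⟩⟩)
        · exact Or.inr (Or.inr ⟨h, Or.inr ⟨w, rfl⟩⟩)
      · exact h.elim
    | Sum.inr w, Sum.inl u =>
      rcases hrel with h | h
      · exact h.elim
      · obtain ⟨i, rfl, _⟩ := h
        rcases hS' hadj with h | h
        · exact Or.inl (Or.inr ⟨h, Or.inr ⟨w, rfl⟩⟩)
        · exact Or.inr (Or.inr ⟨h, Or.inl ⟨i, rfl⟩⟩)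
    | Sum.inr w, Sum.inr w' =>
      rcases hS' hadj with h | h
      · exact Or.inl (Or.inr ⟨h, Or.inr ⟨w, rfl⟩⟩)
      · exact Or.inr (Or.inr ⟨h, Or.inr ⟨w', rfl⟩⟩)
  · -- cardinality
    have h1 : (S \ HPart Gb Hb) = Sum.inl '' U := by
      ext p
      constructor
      · rintro ⟨hpS, hpH⟩
        match p with
        | Sum.inl u =>
          exact ⟨u, ⟨hpS, fun i hi => hpH (Or.inl ⟨i, by rw [hi]⟩)⟩, rfl⟩
        | Sum.inr w => exact absurd (Or.inr ⟨w, rfl⟩) hpH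
      · rintro ⟨u, ⟨huS, hub⟩, rfl⟩
        refine ⟨huS, fun h => ?_⟩
        rcases h with ⟨i, hi⟩ | ⟨w, hw⟩
        · exact hub i (Sum.inl.inj hi)
        · exact absurd hw (by simp)
    have hcard : ((Sum.inl '' U : Set (GlueVtx Gb Hb')).ncard)
        = (S \ HPart Gb Hb).ncard := by
      rw [h1]
      exact (Set.ncard_image_of_injective _ Sum.inl_injective).trans
        (Set.ncard_image_of_injective _ Sum.inl_injective).symm
    calc ((Sum.inl '' U) ∪ (S' ∩ HPart Gb Hb')).ncard
        ≤ (Sum.inl '' U : Set (GlueVtx Gb Hb')).ncard + (S' ∩ HPart Gb Hb').ncard :=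
          Set.ncard_union_le _ _
      _ = (S \ HPart Gb Hb).ncard + (S' ∩ HPart Gb Hb').ncard := by rw [hcard]


theorem stmt_19 {t c : ℕ} (Gb Hb Hb' : BGraph t) (hG : Gb.Strong)
    (k : ℕ) (hk : c ≤ k)
    -- `H` and `H'` are `c`-equivalent: `P_H(X) = P_{H'}(X) + c` for every `X ⊆ [t]`
    (hequiv : ∀ (Kb : BGraph t), Kb.Strong →
      ∀ X : Set (Fin t), profile Kb Hb X = profile Kb Hb' X + (c : ℕ∞)) :
    (∃ S : Set (GlueVtx Gb Hb), IsVC (glue Gb Hb) S ∧ S.ncard ≤ k) ↔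
    (∃ S : Set (GlueVtx Gb Hb'), IsVC (glue Gb Hb') S ∧ S.ncard ≤ k - c) := by
  haveI := glueFinite Gb Hb
  haveI := glueFinite Gb Hb'
  constructor
  · rintro ⟨S, hS, hcard⟩
    have hcompS : Compatible Gb Hb S
        {i | ∀ u : Gb.Vtx, Gb.G.Adj (Gb.bd i) u → Sum.inl u ∈ S} := fun i => Iff.rfl
    have h1 := profile_le Gb Hb _ S hS hcompS
    have heq := hequiv Gb hG {i | ∀ u : Gb.Vtx, Gb.G.Adj (Gb.bd i) u → Sum.inl u ∈ S}
    have hne : profile Gb Hb' {i | ∀ u : Gb.Vtx, Gb.G.Adj (Gb.bd i) u → Sum.inl u ∈ S}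
        ≠ ⊤ := by
      intro h
      rw [h, top_add] at heq
      rw [heq] at h1
      exact ENat.coe_ne_top _ (top_le_iff.mp h1)
    obtain ⟨S', hS', hcomp', hval⟩ := profile_attained Gb Hb' _ hne
    obtain ⟨T, hT, hTcard⟩ := transfer Gb Hb Hb' hG S hS S' hS' hcomp'
    refine ⟨T, hT, ?_⟩
    have h2 : (S' ∩ HPart Gb Hb').ncard + c ≤ (S ∩ HPart Gb Hb).ncard := by
      have : ((S' ∩ HPart Gb Hb').ncard : ℕ∞) + c ≤ ((S ∩ HPart Gb Hb).ncard : ℕ∞) := by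
        rw [← hval, ← heq]; exact h1
      exact_mod_cast this
    have h3 := Set.ncard_inter_add_ncard_diff_eq_ncard S (HPart Gb Hb)
    omega
  · rintro ⟨S', hS', hcard⟩
    have hcompS' : Compatible Gb Hb' S'
        {i | ∀ u : Gb.Vtx, Gb.G.Adj (Gb.bd i) u → Sum.inl u ∈ S'} := fun i => Iff.rfl
    have h1 := profile_le Gb Hb' _ S' hS' hcompS'
    have heq := hequiv Gb hG {i | ∀ u : Gb.Vtx, Gb.G.Adj (Gb.bd i) u → Sum.inl u ∈ S'}
    have hne : profile Gb Hb {i | ∀ u : Gb.Vtx, Gb.G.Adj (Gb.bd i) u → Sum.inl u ∈ S'}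
        ≠ ⊤ := by
      intro h
      rw [h] at heq
      rcases (WithTop.add_eq_top.mp heq.symm) with h' | h'
      · rw [h'] at h1
        exact ENat.coe_ne_top _ (top_le_iff.mp h1)
      · exact ENat.coe_ne_top c h'
    obtain ⟨S, hS, hcomp, hval⟩ := profile_attained Gb Hb _ hne
    obtain ⟨T, hT, hTcard⟩ := transfer Gb Hb' Hb hG S' hS' S hS hcomp
    refine ⟨T, hT, ?_⟩
    have h2 : (S ∩ HPart Gb Hb).ncard ≤ (S' ∩ HPart Gb Hb').ncard + c := by
      have : ((S ∩ HPart Gb Hb).ncard : ℕ∞)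
          ≤ ((S' ∩ HPart Gb Hb').ncard : ℕ∞) + c := by
        rw [← hval, heq]
        exact add_le_add h1 le_rfl
      exact_mod_cast this
    have h3 := Set.ncard_inter_add_ncard_diff_eq_ncard S' (HPart Gb Hb')
    omega
end
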